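/- arXiv:1305.2890 — 3 statements merged into one kernel-verified Lean document; each statement's English description precedes it below -/
import Mathlib

section
/- Let (Xᵢ)ᵢ₌₁ᴺ and (Yᵢ)ᵢ₌₁ᴺ be families in (L⁰)^d such that σ({X₁, …, X_N}) = σ({Y₁, …, Y_N}). Then conv(X₁, …, X_N) = conv(Y₁, …, Y_N), and moreover (Xᵢ)ᵢ₌₁ᴺ are affinely independent if and only if (Yᵢ)ᵢ₌₁ᴺ are affinely independent. -/
open MeasureTheory Filter

noncomputable section

variable {Ω : Type*} [MeasurableSpace Ω]

/-- `L⁰(Ω,𝒜,P)`: equivalence classes of real-valued measurable functions modulo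
`P`-almost-sure equality. -/
abbrev L0 (P : Measure Ω) : Type _ := Ω →ₘ[P] ℝ

namespace L0

variable (P : Measure Ω)

/-- The indicator `1_A` of a measurable set as an element of `L⁰`. -/
def ind (A : Set Ω) : L0 P :=
  letI := Classical.dec (MeasurableSet A)
  if h : MeasurableSet A then
    AEEqFun.mk (A.indicator fun _ => (1 : ℝ)) (aestronglyMeasurable_const.indicator h)
  else 0

/-- A partition: a countable family of measurable sets, pairwise disjoint up to null
sets, covering `Ω` up to a null set. -/
structure IsPartition (A : ℕ → Set Ω) : Prop where
  meas : ∀ i, MeasurableSet (A i)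
  disj : ∀ i j, i ≠ j → P (A i ∩ A j) = 0
  full : P (⋃ i, A i) = 1

/-- `Z = Σᵢ 1_{Aᵢ} Xᵢ` in `L⁰`: `Z` agrees with `Xᵢ` on `Aᵢ`, i.e. `1_{Aᵢ}·Z = 1_{Aᵢ}·Xᵢ`. -/
def IsGluing1 (A : ℕ → Set Ω) (X : ℕ → L0 P) (Z : L0 P) : Prop :=
  ∀ i, ind P (A i) * Z = ind P (A i) * X i

/-- `Z = Σᵢ 1_{Aᵢ} Xᵢ` in `(L⁰)^d`. -/
def IsGluing {d : ℕ} (A : ℕ → Set Ω) (X : ℕ → Fin d → L0 P) (Z : Fin d → L0 P) : Prop :=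
  ∀ k, IsGluing1 P A (fun i => X i k) (Z k)

/-- The σ-stable hull `σ(𝒞)` of a set `𝒞 ⊆ (L⁰)^d`. -/
def sigmaHull {d : ℕ} (C : Set (Fin d → L0 P)) : Set (Fin d → L0 P) :=
  {Z | ∃ (A : ℕ → Set Ω) (X : ℕ → Fin d → L0 P),
    IsPartition P A ∧ (∀ i, X i ∈ C) ∧ IsGluing P A X Z}

/-- A function `f` defined (at least) on a σ-stable set `C ⊆ (L⁰)^d` is local if
`f(Σᵢ 1_{Aᵢ} Xᵢ) = Σᵢ 1_{Aᵢ} f(Xᵢ)` for every partition `(Aᵢ)` and family `(Xᵢ)` in `C`. -/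
def IsLocal {d e : ℕ} (C : Set (Fin d → L0 P)) (f : (Fin d → L0 P) → (Fin e → L0 P)) : Prop :=
  ∀ (A : ℕ → Set Ω) (X : ℕ → Fin d → L0 P) (Z : Fin d → L0 P),
    IsPartition P A → (∀ i, X i ∈ C) → Z ∈ C → IsGluing P A X Z →
    IsGluing P A (fun i => f (X i)) (f Z)

/-- Locality for functions with values in `L⁰`. -/
def IsLocalScalar {d : ℕ} (C : Set (Fin d → L0 P)) (f : (Fin d → L0 P) → L0 P) : Prop :=
  ∀ (A : ℕ → Set Ω) (X : ℕ → Fin d → L0 P) (Z : Fin d → L0 P),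
    IsPartition P A → (∀ i, X i ∈ C) → Z ∈ C → IsGluing P A X Z →
    IsGluing1 P A (fun i => f (X i)) (f Z)

/-- Locality for functions from `L⁰` to `L⁰`. -/
def IsLocal1 (C : Set (L0 P)) (f : L0 P → L0 P) : Prop :=
  ∀ (A : ℕ → Set Ω) (X : ℕ → L0 P) (Z : L0 P),
    IsPartition P A → (∀ i, X i ∈ C) → Z ∈ C → IsGluing1 P A X Z →
    IsGluing1 P A (fun i => f (X i)) (f Z)

/-- `P`-almost sure convergence of a sequence in `L⁰`. -/
def TendstoAS (X : ℕ → L0 P) (Y : L0 P) : Prop :=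
  ∀ᵐ ω ∂P, Tendsto (fun n => X n ω) atTop (nhds (Y ω))

/-- `P`-almost sure convergence of a sequence in `(L⁰)^d`. -/
def TendstoASd {d : ℕ} (X : ℕ → Fin d → L0 P) (Y : Fin d → L0 P) : Prop :=
  ∀ k, TendstoAS P (fun n => X n k) (Y k)

/-- Sequential continuity (w.r.t. `P`-a.s. convergence) of `f` on `C ⊆ (L⁰)^d`. -/
def SeqContinuous {d e : ℕ} (C : Set (Fin d → L0 P)) (f : (Fin d → L0 P) → (Fin e → L0 P)) :
    Prop :=
  ∀ (X : ℕ → Fin d → L0 P) (Y : Fin d → L0 P), (∀ n, X n ∈ C) → Y ∈ C →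
    TendstoASd P X Y → TendstoASd P (fun n => f (X n)) (f Y)

/-- Sequential continuity for functions from `L⁰` to `L⁰`. -/
def SeqContinuous1 (C : Set (L0 P)) (f : L0 P → L0 P) : Prop :=
  ∀ (X : ℕ → L0 P) (Y : L0 P), (∀ n, X n ∈ C) → Y ∈ C →
    TendstoAS P X Y → TendstoAS P (fun n => f (X n)) (f Y)

/-- The `L⁰`-convex hull `conv(X₁,…,X_N)` of a finite family in `(L⁰)^d`. -/
def conv {d : ℕ} {ι : Type*} [Fintype ι] (X : ι → Fin d → L0 P) : Set (Fin d → L0 P) :=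
  {Y | ∃ lam : ι → L0 P, (∀ i, 0 ≤ lam i) ∧ (∑ i, lam i) = 1 ∧ Y = ∑ i, lam i • X i}

/-- The affine hull `aff(X₁,…,X_N)` of a finite family in `(L⁰)^d`. -/
def aff {d : ℕ} {ι : Type*} [Fintype ι] (X : ι → Fin d → L0 P) : Set (Fin d → L0 P) :=
  {Y | ∃ lam : ι → L0 P, (∑ i, lam i) = 1 ∧ Y = ∑ i, lam i • X i}

/-- Affine independence of `X₁,…,X_N` in `(L⁰)^d`: either `N = 1`, or `N > 1` and
`Σᵢ₌₁^{N−1} λᵢ (Xᵢ − X_N) = 0` implies `λ₁ = ⋯ = λ_{N−1} = 0`. -/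
def AffInd {d : ℕ} : {N : ℕ} → (X : Fin N → Fin d → L0 P) → Prop
  | 0, _ => False
  | 1, _ => True
  | (m + 2), X => ∀ lam : Fin (m + 1) → L0 P,
      (∑ i : Fin (m + 1), lam i • (X i.castSucc - X (Fin.last (m + 1)))) = 0 → ∀ i, lam i = 0

/-- The `L⁰`-scalar product on `(L⁰)^d`. -/
def inner {d : ℕ} (X Y : Fin d → L0 P) : L0 P := ∑ k, X k * Y k

/-- The `L⁰`-norm on `(L⁰)^d`. -/
def norm {d : ℕ} (X : Fin d → L0 P) : L0 P :=
  AEEqFun.comp Real.sqrt Real.continuous_sqrt (inner P X X)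

/-- `D` is the essential supremum (least upper bound in the `P`-a.s. order) of a set
`F ⊆ L⁰`. -/
def IsEssSup (F : Set (L0 P)) (D : L0 P) : Prop :=
  (∀ X ∈ F, X ≤ D) ∧ ∀ D' : L0 P, (∀ X ∈ F, X ≤ D') → D ≤ D'

/-- `𝒞 ⊆ (L⁰)^d` is bounded if `esssup_{X ∈ 𝒞} ‖X‖` belongs to `L⁰`. -/
def Bounded {d : ℕ} (C : Set (Fin d → L0 P)) : Prop :=
  ∃ b : L0 P, ∀ X ∈ C, norm P X ≤ b

/-- `𝒞 ⊆ (L⁰)^d` is sequentially closed if it contains all `P`-a.s. limits of its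
sequences. -/
def SeqClosed {d : ℕ} (C : Set (Fin d → L0 P)) : Prop :=
  ∀ (X : ℕ → Fin d → L0 P) (Y : Fin d → L0 P), (∀ n, X n ∈ C) → TendstoASd P X Y → Y ∈ C

/-- `L⁰`-convexity of a subset of `(L⁰)^d`. -/
def L0Convex {d : ℕ} (C : Set (Fin d → L0 P)) : Prop :=
  ∀ X ∈ C, ∀ Y ∈ C, ∀ lam : L0 P, 0 ≤ lam → lam ≤ 1 → lam • X + (1 - lam) • Y ∈ C

/-- The vertices `Y_k^π = (1/k) Σᵢ₌₁ᵏ X_{π(i)}` of the member `C_π` of the barycentric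
subdivision (0-based: `bary P X π k = (1/(k+1)) Σ_{i ≤ k} X_{π(i)}`). -/
def bary {d N : ℕ} (X : Fin N → Fin d → L0 P) (π : Equiv.Perm (Fin N)) (k : Fin N) :
    Fin d → L0 P :=
  ((k.1 + 1 : ℝ)⁻¹) • ∑ i ∈ Finset.univ.filter (· ≤ k), X (π i)

end L0

end

namespace StmtAux
open MeasureTheory Filter
variable {Ω : Type*} [MeasurableSpace Ω] {P : Measure Ω}

lemma l0_ext {f g : L0 P} (h : ∀ᵐ ω ∂P, f ω = g ω) : f = g := AEEqFun.ext h

lemma eq_ae {f g : L0 P} (h : f = g) : ∀ᵐ ω ∂P, f ω = g ω := h ▸ Filter.Eventually.of_forall fun _ => rfl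

lemma mul_ae (f g : L0 P) : ∀ᵐ ω ∂P, (f * g) ω = f ω * g ω :=
  (AEEqFun.coeFn_mul f g).mono fun _ h => h

lemma sub_ae (f g : L0 P) : ∀ᵐ ω ∂P, (f - g) ω = f ω - g ω :=
  (AEEqFun.coeFn_sub f g).mono fun _ h => h

lemma add_ae (f g : L0 P) : ∀ᵐ ω ∂P, (f + g) ω = f ω + g ω :=
  (AEEqFun.coeFn_add f g).mono fun _ h => h

lemma zero_ae : ∀ᵐ ω ∂P, (0 : L0 P) ω = 0 :=
  (AEEqFun.coeFn_zero (μ := P)).mono fun _ h => h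

lemma one_ae : ∀ᵐ ω ∂P, (1 : L0 P) ω = 1 :=
  (AEEqFun.coeFn_one (μ := P)).mono fun _ h => h

lemma sum_ae {ι : Type*} (s : Finset ι) (f : ι → L0 P) :
    ∀ᵐ ω ∂P, (∑ i ∈ s, f i) ω = ∑ i ∈ s, f i ω := by
  classical
  induction s using Finset.cons_induction with
  | empty => simpa using zero_ae
  | cons a s ha ih =>
      filter_upwards [add_ae (f a) (∑ i ∈ s, f i), ih] with ω h1 h2
      rw [Finset.sum_cons, h1, h2, Finset.sum_cons]

lemma smul_apply' {d : ℕ} (a : L0 P) (X : Fin d → L0 P) (k : Fin d) : (a • X) k = a * X k := rfl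

-- algebraic lemmas
lemma zero_mul' (a : L0 P) : 0 * a = 0 := l0_ext <| by
  filter_upwards [mul_ae 0 a, zero_ae (P := P)] with ω h1 h2
  rw [h1, h2, zero_mul]

lemma mul_zero' (a : L0 P) : a * 0 = 0 := by rw [mul_comm, zero_mul']

lemma mul_sub' (a b c : L0 P) : a * (b - c) = a * b - a * c := l0_ext <| by
  filter_upwards [mul_ae a (b - c), sub_ae b c, sub_ae (a * b) (a * c), mul_ae a b, mul_ae a c]
    with ω h1 h2 h3 h4 h5
  rw [h1, h2, h3, h4, h5, mul_sub]

lemma sub_mul' (a b c : L0 P) : (a - b) * c = a * c - b * c := by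
  rw [mul_comm, mul_sub', mul_comm c a, mul_comm c b]

lemma mul_add' (a b c : L0 P) : a * (b + c) = a * b + a * c := l0_ext <| by
  filter_upwards [mul_ae a (b + c), add_ae b c, add_ae (a * b) (a * c), mul_ae a b, mul_ae a c]
    with ω h1 h2 h3 h4 h5
  rw [h1, h2, h3, h4, h5, mul_add]

lemma mul_neg' (a b : L0 P) : a * (-b) = -(a * b) := by
  have : a * (0 - b) = a * 0 - a * b := mul_sub' a 0 b
  simpa [mul_zero'] using this

lemma mul_sum' {ι : Type*} (s : Finset ι) (a : L0 P) (f : ι → L0 P) :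
    a * ∑ i ∈ s, f i = ∑ i ∈ s, a * f i := by
  classical
  induction s using Finset.cons_induction with
  | empty => simpa using mul_zero' a
  | cons b s hb ih => rw [Finset.sum_cons, mul_add', ih, Finset.sum_cons]

lemma sum_mul' {ι : Type*} (s : Finset ι) (a : L0 P) (f : ι → L0 P) :
    (∑ i ∈ s, f i) * a = ∑ i ∈ s, f i * a := by
  rw [mul_comm, mul_sum']
  exact Finset.sum_congr rfl fun i _ => mul_comm a (f i)


open L0

lemma coeFn_ind {A : Set Ω} (hA : MeasurableSet A) :
    ∀ᵐ ω ∂P, L0.ind P A ω = A.indicator (fun _ => (1 : ℝ)) ω := by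
  unfold L0.ind
  rw [dif_pos hA]
  exact AEEqFun.coeFn_mk (μ := P) (A.indicator fun _ => (1 : ℝ))
    (aestronglyMeasurable_const.indicator hA)

lemma partition_ae [IsProbabilityMeasure P] {A : ℕ → Set Ω} (hA : IsPartition P A) :
    ∀ᵐ ω ∂P, ∃! i, ω ∈ A i := by
  have h1 : ∀ᵐ ω ∂P, ω ∈ ⋃ i, A i := by
    have hm : MeasurableSet (⋃ i, A i) := MeasurableSet.iUnion hA.meas
    have hc : P (⋃ i, A i)ᶜ = 0 := by
      rw [measure_compl hm (measure_ne_top P _), hA.full, measure_univ, tsub_self]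
    exact (measure_eq_zero_iff_ae_notMem.mp hc).mono fun ω h => Set.not_notMem.mp h
  have h2 : ∀ᵐ ω ∂P, ∀ i j, i ≠ j → ω ∉ A i ∩ A j := by
    rw [ae_all_iff]
    intro i
    rw [ae_all_iff]
    intro j
    by_cases hij : i = j
    · exact Filter.Eventually.of_forall fun ω h => absurd hij h
    · exact (measure_eq_zero_iff_ae_notMem.mp (hA.disj i j hij)).mono fun ω h _ => h
  filter_upwards [h1, h2] with ω hω1 hω2
  obtain ⟨i, hi⟩ := Set.mem_iUnion.mp hω1
  exact ⟨i, hi, fun j hj => by_contra fun hne => hω2 j i hne ⟨hj, hi⟩⟩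

lemma self_mem [IsProbabilityMeasure P] {d N : ℕ} (X : Fin N → Fin d → L0 P) (j : Fin N) :
    X j ∈ sigmaHull P (Set.range X) := by
  classical
  refine ⟨fun i => if i = 0 then Set.univ else ∅, fun _ => X j, ⟨?_, ?_, ?_⟩,
    fun i => ⟨j, rfl⟩, fun k i => rfl⟩
  · intro i; by_cases h : i = 0 <;> simp [h]
  · intro i j' hne
    by_cases hi : i = 0
    · have : j' ≠ 0 := fun hc => hne (hi.trans hc.symm)
      simp [hi, this]
    · simp [hi]
  · have : (⋃ i, if i = 0 then Set.univ else (∅ : Set Ω)) = Set.univ :=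
      Set.eq_univ_of_univ_subset (by
        intro ω _
        exact Set.mem_iUnion.2 ⟨0, by simp⟩)
    rw [this, measure_univ]

/-- helper sum over selector indicators in ℝ -/
lemma sum_sel {N : ℕ} (c : Fin N) (v : Fin N → ℝ) :
    ∑ m, (if m = c then (1 : ℝ) else 0) * v m = v c := by
  classical
  have h : ∀ m, (if m = c then (1 : ℝ) else 0) * v m = if m = c then v m else 0 := by
    intro m; by_cases h : m = c <;> simp [h]
  rw [Finset.sum_congr rfl fun m _ => h m, Finset.sum_ite_eq' Finset.univ c v,
    if_pos (Finset.mem_univ c)]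

lemma sum_sel_one {N : ℕ} (c : Fin N) :
    ∑ m, (if m = c then (1 : ℝ) else 0) = 1 := by
  classical
  have := sum_sel c (fun _ => (1 : ℝ))
  simpa using this

lemma sel_of_hull [IsProbabilityMeasure P] {d N : ℕ} {X : Fin N → Fin d → L0 P}
    {Z : Fin d → L0 P} (hZ : Z ∈ sigmaHull P (Set.range X)) :
    ∃ lam : Fin N → L0 P,
      (∀ᵐ ω ∂P, ∃ m₀, ∀ m, lam m ω = if m = m₀ then (1 : ℝ) else 0) ∧
      ∀ k, Z k = ∑ m, lam m * X m k := by
  classical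
  obtain ⟨A, W, hpart, hmem, hglue⟩ := hZ
  choose φ hφ using hmem
  set B : Fin N → Set Ω := fun m => ⋃ i ∈ {i : ℕ | φ i = m}, A i with hB
  have hBmeas : ∀ m, MeasurableSet (B m) :=
    fun m => MeasurableSet.biUnion (Set.to_countable _) fun i _ => hpart.meas i
  have hBmem : ∀ ω, (∃! i, ω ∈ A i) → ∀ i, ω ∈ A i → ∀ m, (ω ∈ B m ↔ φ i = m) := by
    intro ω huniq i hi m
    constructor
    · intro hm
      obtain ⟨j, hj, hj2⟩ := Set.mem_iUnion₂.mp hm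
      obtain ⟨i', -, hiu⟩ := huniq
      rw [(hiu j hj2).trans (hiu i hi).symm] at hj
      exact hj
    · intro hm
      exact Set.mem_iUnion₂.mpr ⟨i, hm, hi⟩
  have hindB : ∀ᵐ ω ∂P, ∀ m, L0.ind P (B m) ω = (B m).indicator (fun _ => (1 : ℝ)) ω :=
    ae_all_iff.mpr fun m => coeFn_ind (hBmeas m)
  refine ⟨fun m => L0.ind P (B m), ?_, ?_⟩
  · filter_upwards [partition_ae hpart, hindB] with ω h1 h2
    obtain ⟨i, hi, hiu⟩ := h1
    refine ⟨φ i, fun m => ?_⟩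
    rw [h2 m]
    by_cases hm : m = φ i
    · rw [if_pos hm,
        Set.indicator_of_mem ((hBmem ω ⟨i, hi, hiu⟩ i hi m).mpr hm.symm) (fun _ => (1 : ℝ))]
    · rw [if_neg hm, Set.indicator_of_notMem
        (fun hc => hm ((hBmem ω ⟨i, hi, hiu⟩ i hi m).mp hc).symm) (fun _ => (1 : ℝ))]
  · intro k
    apply l0_ext
    have hglue' : ∀ᵐ ω ∂P, ∀ i, L0.ind P (A i) ω * Z k ω = L0.ind P (A i) ω * X (φ i) k ω := by
      rw [ae_all_iff]
      intro i
      filter_upwards [eq_ae (hglue k i), mul_ae (L0.ind P (A i)) (Z k),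
        mul_ae (L0.ind P (A i)) (W i k)] with ω h1 h2 h3
      rw [hφ i, ← h2, ← h3]
      exact h1
    have hindA : ∀ᵐ ω ∂P, ∀ i, L0.ind P (A i) ω = (A i).indicator (fun _ => (1 : ℝ)) ω :=
      ae_all_iff.mpr fun i => coeFn_ind (hpart.meas i)
    have hsum : ∀ᵐ ω ∂P, (∑ m, L0.ind P (B m) * X m k) ω = ∑ m, L0.ind P (B m) ω * X m k ω := by
      filter_upwards [sum_ae Finset.univ (fun m => L0.ind P (B m) * X m k),
        ae_all_iff.mpr fun m : Fin N => mul_ae (L0.ind P (B m)) (X m k)] with ω h1 h2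
      rw [h1]
      exact Finset.sum_congr rfl fun m _ => h2 m
    filter_upwards [partition_ae hpart, hglue', hindA, hindB, hsum] with ω h1 h2 h3 h4 h5
    obtain ⟨i, hi, hiu⟩ := h1
    have hZω : Z k ω = X (φ i) k ω := by
      have := h2 i
      rw [h3 i, Set.indicator_of_mem hi (fun _ => (1 : ℝ)), one_mul, one_mul] at this
      exact this
    rw [h5, hZω]
    have hterm : ∀ m, L0.ind P (B m) ω * X m k ω = (if m = φ i then (1 : ℝ) else 0) * X m k ω := by
      intro m
      rw [h4 m]
      by_cases hm : m = φ i
      · rw [if_pos hm,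
          Set.indicator_of_mem ((hBmem ω ⟨i, hi, hiu⟩ i hi m).mpr hm.symm) (fun _ => (1 : ℝ))]
      · rw [if_neg hm, Set.indicator_of_notMem
          (fun hc => hm ((hBmem ω ⟨i, hi, hiu⟩ i hi m).mp hc).symm) (fun _ => (1 : ℝ))]
    rw [Finset.sum_congr rfl fun m _ => hterm m, sum_sel (φ i) (fun m => X m k ω)]

lemma le_of_ae {f g : L0 P} (h : ∀ᵐ ω ∂P, f ω ≤ g ω) : f ≤ g := AEEqFun.coeFn_le.1 h

lemma ae_of_le {f g : L0 P} (h : f ≤ g) : ∀ᵐ ω ∂P, f ω ≤ g ω := AEEqFun.coeFn_le.2 h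

lemma mem_conv_of_sel {d N : ℕ} {X : Fin N → Fin d → L0 P} {Z : Fin d → L0 P} {lam : Fin N → L0 P}
    (hsel : ∀ᵐ ω ∂P, ∃ m₀, ∀ m, lam m ω = if m = m₀ then (1 : ℝ) else 0)
    (hZ : ∀ k, Z k = ∑ m, lam m * X m k) : Z ∈ conv P X := by
  refine ⟨lam, ?_, ?_, ?_⟩
  · intro m
    apply le_of_ae
    filter_upwards [hsel, zero_ae (P := P)] with ω h h0
    obtain ⟨m₀, hm⟩ := h
    rw [h0, hm m]
    by_cases hm0 : m = m₀ <;> simp [hm0]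
  · apply l0_ext
    filter_upwards [sum_ae Finset.univ lam, hsel, one_ae (P := P)] with ω h1 h2 h3
    obtain ⟨m₀, hm⟩ := h2
    rw [h1, h3, Finset.sum_congr rfl fun m _ => hm m, sum_sel_one m₀]
  · funext k
    rw [hZ k, Finset.sum_apply]
    rfl

lemma mem_conv_of_hull [IsProbabilityMeasure P] {d N : ℕ} {X : Fin N → Fin d → L0 P} {Z : Fin d → L0 P}
    (hZ : Z ∈ sigmaHull P (Set.range X)) : Z ∈ conv P X := by
  obtain ⟨lam, hsel, hl⟩ := sel_of_hull hZ
  exact mem_conv_of_sel hsel hl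

lemma conv_subset_conv {d N : ℕ} {X Y : Fin N → Fin d → L0 P}
    (hY : ∀ j, Y j ∈ conv P X) : conv P Y ⊆ conv P X := by
  rintro W ⟨mu, hmu0, hmu1, rfl⟩
  choose al hal0 hal1 halY using hY
  refine ⟨fun m => ∑ j, mu j * al j m, ?_, ?_, ?_⟩
  · intro m
    apply le_of_ae
    have hnn : ∀ᵐ ω ∂P, ∀ j, (0 : ℝ) ≤ mu j ω ∧ (0 : ℝ) ≤ al j m ω := by
      rw [ae_all_iff]
      intro j
      filter_upwards [ae_of_le (hmu0 j), ae_of_le (hal0 j m), zero_ae (P := P)] with ω ha hb h0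
      rw [h0] at ha hb
      exact ⟨ha, hb⟩
    filter_upwards [hnn, zero_ae (P := P), sum_ae Finset.univ (fun j => mu j * al j m),
      ae_all_iff.mpr fun j : Fin N => mul_ae (mu j) (al j m)] with ω h1 h0 h2 h3
    rw [h0, h2, Finset.sum_congr rfl fun j _ => h3 j]
    exact Finset.sum_nonneg fun j _ => mul_nonneg (h1 j).1 (h1 j).2
  · rw [Finset.sum_comm]
    have : ∀ j, (∑ m, mu j * al j m) = mu j := by
      intro j
      rw [← mul_sum', hal1 j, mul_one]
    rw [Finset.sum_congr rfl fun j _ => this j, hmu1]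
  · funext k
    rw [Finset.sum_apply, Finset.sum_apply]
    have hY' : ∀ j, Y j k = ∑ m, al j m * X m k := by
      intro j
      have := congrFun (halY j) k
      rw [this, Finset.sum_apply]
      rfl
    calc ∑ j, (mu j • Y j) k = ∑ j, mu j * Y j k := rfl
      _ = ∑ j, ∑ m, mu j * (al j m * X m k) := by
          rw [Finset.sum_congr rfl fun j _ => by rw [hY' j, mul_sum']]
      _ = ∑ m, ∑ j, (mu j * al j m) * X m k := by
          rw [Finset.sum_comm]
          exact Finset.sum_congr rfl fun m _ => Finset.sum_congr rfl fun j _ => (mul_assoc _ _ _).symm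
      _ = ∑ m, ((∑ j, mu j * al j m) • X m) k := by
          exact Finset.sum_congr rfl fun m _ => by rw [smul_apply', sum_mul']

lemma esum {n d : ℕ} (X : Fin (n+2) → Fin d → L0 P) (a : Fin (n+2)) (k : Fin d) :
    ∑ t : Fin (n+1), (if a = t.castSucc then (1 : L0 P) else 0) *
      (X t.castSucc k - X (Fin.last (n+1)) k) = X a k - X (Fin.last (n+1)) k := by
  classical
  induction a using Fin.lastCases with
  | last =>
      rw [sub_self]
      apply Finset.sum_eq_zero
      intro t _
      rw [if_neg (Fin.castSucc_lt_last t).ne', zero_mul']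
  | cast s =>
      have h : ∀ t : Fin (n+1), (if s.castSucc = t.castSucc then (1 : L0 P) else 0) *
          (X t.castSucc k - X (Fin.last (n+1)) k) =
          if s = t then X t.castSucc k - X (Fin.last (n+1)) k else 0 := by
        intro t
        by_cases h : s = t
        · rw [if_pos (by rw [h]), if_pos h, one_mul]
        · rw [if_neg (fun hc => h (Fin.castSucc_injective _ hc)), if_neg h, zero_mul']
      rw [Finset.sum_congr rfl fun t _ => h t, Finset.sum_ite_eq, if_pos (Finset.mem_univ s)]

lemma ae_ne_of_affInd [IsProbabilityMeasure P] {d n : ℕ} {X : Fin (n+2) → Fin d → L0 P}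
    (hX : AffInd P X) {i j : Fin (n+2)} (hij : i ≠ j) :
    ∀ᵐ ω ∂P, ∃ k, X i k ω ≠ X j k ω := by
  classical
  have hXfun : ∀ lam : Fin (n+1) → L0 P,
      (∑ t : Fin (n+1), lam t • (X t.castSucc - X (Fin.last (n+1)))) = 0 → ∀ t, lam t = 0 := hX
  set A : Set Ω := ⋂ k, {ω | X i k ω = X j k ω} with hA
  have hAmeas : MeasurableSet A :=
    MeasurableSet.iInter fun k => measurableSet_eq_fun (X i k).measurable (X j k).measurable
  have hAmem : ∀ ω, ω ∈ A ↔ ∀ k, X i k ω = X j k ω := by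
    intro ω; simp [hA, Set.mem_iInter]
  have hkey : ∀ k, L0.ind P A * (X i k - X j k) = 0 := by
    intro k
    apply l0_ext
    filter_upwards [coeFn_ind hAmeas, mul_ae (L0.ind P A) (X i k - X j k),
      sub_ae (X i k) (X j k), zero_ae (P := P)] with ω h1 h2 h3 h0
    rw [h2, h1, h3, h0]
    by_cases hω : ω ∈ A
    · rw [(hAmem ω).mp hω k, sub_self, mul_zero]
    · rw [Set.indicator_of_notMem hω, zero_mul]
  set lam : Fin (n+1) → L0 P := fun t =>
    L0.ind P A * ((if i = t.castSucc then (1 : L0 P) else 0) -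
      (if j = t.castSucc then (1 : L0 P) else 0)) with hlam
  have hsum0 : ∑ t : Fin (n+1), lam t • (X t.castSucc - X (Fin.last (n+1))) = 0 := by
    funext k
    rw [Finset.sum_apply]
    have hterm : ∀ t : Fin (n+1), (lam t • (X t.castSucc - X (Fin.last (n+1)))) k
        = L0.ind P A * ((if i = t.castSucc then (1 : L0 P) else 0) *
            (X t.castSucc k - X (Fin.last (n+1)) k))
          - L0.ind P A * ((if j = t.castSucc then (1 : L0 P) else 0) *
            (X t.castSucc k - X (Fin.last (n+1)) k)) := by
      intro t
      rw [smul_apply']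
      have hsub : (X t.castSucc - X (Fin.last (n+1))) k
          = X t.castSucc k - X (Fin.last (n+1)) k := rfl
      rw [hsub]
      simp only [hlam]
      rw [mul_assoc, sub_mul', mul_sub']
    rw [Finset.sum_congr rfl fun t _ => hterm t, Finset.sum_sub_distrib, ← mul_sum', ← mul_sum',
      esum X i k, esum X j k, ← mul_sub', sub_sub_sub_cancel_right, hkey k]
    rfl
  have hall : ∀ t, lam t = 0 := hXfun lam hsum0
  have hind : L0.ind P A = 0 := by
    by_cases hi : i = Fin.last (n+1)
    · have hj : j ≠ Fin.last (n+1) := fun hc => hij (hi.trans hc.symm)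
      obtain ⟨s, hs⟩ := Fin.exists_castSucc_eq.mpr hj
      have hh := hall s
      simp only [hlam] at hh
      rw [if_neg (fun hc => (Fin.castSucc_lt_last s).ne' (hi ▸ hc : Fin.last (n+1) = s.castSucc)),
        if_pos hs.symm, zero_sub, mul_neg', mul_one, neg_eq_zero] at hh
      exact hh
    · obtain ⟨s, hs⟩ := Fin.exists_castSucc_eq.mpr hi
      have hh := hall s
      simp only [hlam] at hh
      rw [if_pos hs.symm, if_neg (fun hc : j = s.castSucc => hij ((hs ▸ hc.symm).symm ▸ rfl)),
        sub_zero, mul_one] at hh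
      exact hh
  filter_upwards [eq_ae hind, coeFn_ind hAmeas, zero_ae (P := P)] with ω h1 h2 h0
  by_contra hc
  push_neg at hc
  have hωA : ω ∈ A := (hAmem ω).mpr hc
  rw [h2, Set.indicator_of_mem hωA, h0] at h1
  exact one_ne_zero h1

lemma affind_transfer [IsProbabilityMeasure P] {d n : ℕ} (X Y : Fin (n+2) → Fin d → L0 P)
    (h : sigmaHull P (Set.range X) = sigmaHull P (Set.range Y)) (hX : AffInd P X) :
    AffInd P Y := by
  classical
  have hXfun : ∀ lam : Fin (n+1) → L0 P,
      (∑ t : Fin (n+1), lam t • (X t.castSucc - X (Fin.last (n+1)))) = 0 → ∀ t, lam t = 0 := hX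
  have hYmem : ∀ j, Y j ∈ sigmaHull P (Set.range X) := fun j => by
    rw [h]; exact self_mem Y j
  have hXmem : ∀ i, X i ∈ sigmaHull P (Set.range Y) := fun i => by
    rw [← h]; exact self_mem X i
  choose al hsel hal using fun j => sel_of_hull (hYmem j)
  choose be hselb hbe using fun i => sel_of_hull (hXmem i)
  have hal1 : ∀ j, (∑ m, al j m) = 1 := by
    intro j
    apply l0_ext
    filter_upwards [sum_ae Finset.univ (al j), hsel j, one_ae (P := P)] with ω h1 h2 h3
    obtain ⟨m₀, hm⟩ := h2
    rw [h1, h3, Finset.sum_congr rfl fun m _ => hm m, sum_sel_one m₀]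
  have halp : ∀ᵐ ω ∂P, ∀ j k, Y j k ω = ∑ m, al j m ω * X m k ω := by
    rw [ae_all_iff]; intro j; rw [ae_all_iff]; intro k
    filter_upwards [eq_ae (hal j k), sum_ae Finset.univ (fun m => al j m * X m k),
      ae_all_iff.mpr fun m : Fin (n+2) => mul_ae (al j m) (X m k)] with ω h1 h2 h3
    rw [h1, h2, Finset.sum_congr rfl fun m _ => h3 m]
  have hbep : ∀ᵐ ω ∂P, ∀ i k, X i k ω = ∑ m, be i m ω * Y m k ω := by
    rw [ae_all_iff]; intro i; rw [ae_all_iff]; intro k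
    filter_upwards [eq_ae (hbe i k), sum_ae Finset.univ (fun m => be i m * Y m k),
      ae_all_iff.mpr fun m : Fin (n+2) => mul_ae (be i m) (Y m k)] with ω h1 h2 h3
    rw [h1, h2, Finset.sum_congr rfl fun m _ => h3 m]
  have hdist : ∀ᵐ ω ∂P, ∀ i i' : Fin (n+2), i ≠ i' → ∃ k, X i k ω ≠ X i' k ω := by
    rw [ae_all_iff]; intro i; rw [ae_all_iff]; intro i'
    by_cases hii : i = i'
    · exact Filter.Eventually.of_forall fun ω hne => absurd hii hne
    · exact (ae_ne_of_affInd hX hii).mono fun ω hk _ => hk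
  have hperm : ∀ᵐ ω ∂P, ∃ f : Fin (n+2) → Fin (n+2), Function.Injective f ∧
      ∀ j m, al j m ω = if f j = m then (1 : ℝ) else 0 := by
    filter_upwards [halp, hbep, hdist, ae_all_iff.mpr fun j => hsel j,
      ae_all_iff.mpr fun i => hselb i] with ω hY' hX' hd hsa hsb
    choose f hf using hsa
    choose g hg using hsb
    have hYX : ∀ j k, Y j k ω = X (f j) k ω := by
      intro j k
      rw [hY' j k, Finset.sum_congr rfl fun m _ => by rw [hf j m],
        sum_sel (f j) (fun m => X m k ω)]
    have hXX : ∀ i k, X i k ω = X (f (g i)) k ω := by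
      intro i k
      rw [hX' i k, Finset.sum_congr rfl fun m _ => by rw [hg i m],
        sum_sel (g i) (fun m => Y m k ω), hYX (g i) k]
    have hfg : ∀ i, f (g i) = i := by
      intro i
      by_contra hne
      obtain ⟨k, hk⟩ := hd (f (g i)) i hne
      exact hk (hXX i k).symm
    refine ⟨f, Finite.injective_iff_surjective.mpr (fun i => ⟨g i, hfg i⟩), fun j m => ?_⟩
    rw [hf j m]
    by_cases hm : m = f j
    · rw [if_pos hm, if_pos hm.symm]
    · rw [if_neg hm, if_neg (Ne.symm hm)]
  show ∀ lam : Fin (n+1) → L0 P,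
      (∑ t : Fin (n+1), lam t • (Y t.castSucc - Y (Fin.last (n+1)))) = 0 → ∀ t, lam t = 0
  intro lam hlam i₀
  set c : Fin (n+2) → L0 P :=
    fun m => ∑ t : Fin (n+1), lam t * (al t.castSucc m - al (Fin.last (n+1)) m) with hc
  have hcsum : ∑ m, c m = 0 := by
    simp only [hc]
    rw [Finset.sum_comm]
    apply Finset.sum_eq_zero
    intro t _
    rw [← mul_sum', Finset.sum_sub_distrib, hal1, hal1, sub_self, mul_zero']
  have hlamk : ∀ k, (∑ t : Fin (n+1), lam t * (Y t.castSucc k - Y (Fin.last (n+1)) k)) = 0 := by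
    intro k
    have hh := congrFun hlam k
    rw [Finset.sum_apply] at hh
    exact hh
  have hkey : ∑ t : Fin (n+1), (c t.castSucc) • (X t.castSucc - X (Fin.last (n+1))) = 0 := by
    funext k
    rw [Finset.sum_apply]
    have e1 : ∀ t : Fin (n+1), (c t.castSucc • (X t.castSucc - X (Fin.last (n+1)))) k
        = c t.castSucc * (X t.castSucc k - X (Fin.last (n+1)) k) := fun t => rfl
    rw [Finset.sum_congr rfl fun t _ => e1 t]
    have e2 : ∑ t : Fin (n+1), c t.castSucc * (X t.castSucc k - X (Fin.last (n+1)) k)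
        = ∑ m, c m * (X m k - X (Fin.last (n+1)) k) := by
      rw [Fin.sum_univ_castSucc (f := fun m => c m * (X m k - X (Fin.last (n+1)) k)),
        sub_self, mul_zero', add_zero]
    rw [e2]
    have e3 : ∑ m, c m * (X m k - X (Fin.last (n+1)) k) = ∑ m, c m * X m k := by
      rw [Finset.sum_congr rfl fun m _ => mul_sub' (c m) (X m k) (X (Fin.last (n+1)) k),
        Finset.sum_sub_distrib, ← sum_mul', hcsum, zero_mul', sub_zero]
    rw [e3]
    have e4 : ∑ m, c m * X m k
        = ∑ t : Fin (n+1), lam t * (Y t.castSucc k - Y (Fin.last (n+1)) k) := by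
      calc ∑ m, c m * X m k
          = ∑ m, ∑ t : Fin (n+1), lam t * ((al t.castSucc m - al (Fin.last (n+1)) m) * X m k) := by
            refine Finset.sum_congr rfl fun m _ => ?_
            simp only [hc]
            rw [sum_mul']
            exact Finset.sum_congr rfl fun t _ => mul_assoc _ _ _
        _ = ∑ t : Fin (n+1), ∑ m, lam t * ((al t.castSucc m - al (Fin.last (n+1)) m) * X m k) :=
            Finset.sum_comm
        _ = ∑ t : Fin (n+1), lam t * (Y t.castSucc k - Y (Fin.last (n+1)) k) := by
            refine Finset.sum_congr rfl fun t _ => ?_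
            rw [← mul_sum']
            congr 1
            rw [Finset.sum_congr rfl fun m _ =>
                sub_mul' (al t.castSucc m) (al (Fin.last (n+1)) m) (X m k),
              Finset.sum_sub_distrib, ← hal t.castSucc k, ← hal (Fin.last (n+1)) k]
    rw [e4, hlamk k]
    rfl
  have hc0 : ∀ t : Fin (n+1), c t.castSucc = 0 := hXfun _ hkey
  have hcL : c (Fin.last (n+1)) = 0 := by
    have h2 := hcsum
    rw [Fin.sum_univ_castSucc (f := c), Finset.sum_eq_zero (fun t _ => hc0 t), zero_add] at h2
    exact h2
  have hcall : ∀ m, c m = 0 := by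
    intro m
    by_cases hm : m = Fin.last (n+1)
    · rw [hm]; exact hcL
    · obtain ⟨s, hs⟩ := Fin.exists_castSucc_eq.mpr hm
      rw [← hs]; exact hc0 s
  have hcp : ∀ᵐ ω ∂P, ∀ m, (0 : ℝ)
      = ∑ t : Fin (n+1), lam t ω * (al t.castSucc m ω - al (Fin.last (n+1)) m ω) := by
    rw [ae_all_iff]
    intro m
    filter_upwards [eq_ae (hcall m), zero_ae (P := P),
      sum_ae Finset.univ (fun t : Fin (n+1) => lam t * (al t.castSucc m - al (Fin.last (n+1)) m)),
      ae_all_iff.mpr fun t : Fin (n+1) => mul_ae (lam t) (al t.castSucc m - al (Fin.last (n+1)) m),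
      ae_all_iff.mpr fun t : Fin (n+1) => sub_ae (al t.castSucc m) (al (Fin.last (n+1)) m)]
      with ω h1 h0 h2 h3 h4
    simp only [hc] at h1
    rw [h0] at h1
    rw [← h1, h2]
    exact Finset.sum_congr rfl fun t _ => by rw [h3 t, h4 t]
  apply l0_ext
  filter_upwards [hperm, hcp, zero_ae (P := P)] with ω hp h1 h0
  obtain ⟨f, hinj, hfa⟩ := hp
  rw [h0]
  have h2 := h1 (f i₀.castSucc)
  have e5 : ∀ t : Fin (n+1),
      lam t ω * (al t.castSucc (f i₀.castSucc) ω - al (Fin.last (n+1)) (f i₀.castSucc) ω)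
      = if t = i₀ then lam t ω else 0 := by
    intro t
    rw [hfa t.castSucc (f i₀.castSucc), hfa (Fin.last (n+1)) (f i₀.castSucc)]
    have hL : ¬ (f (Fin.last (n+1)) = f i₀.castSucc) :=
      fun hcon => (Fin.castSucc_lt_last i₀).ne' (hinj hcon)
    by_cases ht : t = i₀
    · subst ht
      simp [hL]
    · have h5 : ¬ (f t.castSucc = f i₀.castSucc) :=
        fun hcon => ht (Fin.castSucc_injective _ (hinj hcon))
      simp [hL, h5, ht]
  rw [Finset.sum_congr rfl fun t _ => e5 t, Finset.sum_ite_eq' Finset.univ i₀ (fun t => lam t ω),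
    if_pos (Finset.mem_univ i₀)] at h2
  exact h2.symm

lemma affind_transfer' [IsProbabilityMeasure P] {d N : ℕ} (X Y : Fin N → Fin d → L0 P)
    (h : sigmaHull P (Set.range X) = sigmaHull P (Set.range Y)) (hX : AffInd P X) :
    AffInd P Y := by
  match N, X, Y, h, hX with
  | 0, X, Y, h, hX => exact (hX : False).elim
  | 1, X, Y, h, hX => exact trivial
  | (n+2), X, Y, h, hX => exact affind_transfer X Y h hX

end StmtAux

open MeasureTheory in
/-- equal σ-stable hulls give equal convex hulls, and affine independence
transfers. -/
theorem stmt_2 {Ω : Type*} [MeasurableSpace Ω] (P : Measure Ω) [IsProbabilityMeasure P]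
    {d N : ℕ} (X Y : Fin N → Fin d → L0 P)
    (h : L0.sigmaHull P (Set.range X) = L0.sigmaHull P (Set.range Y)) :
    L0.conv P X = L0.conv P Y ∧ (L0.AffInd P X ↔ L0.AffInd P Y) := by
  constructor
  · apply Set.Subset.antisymm
    · exact StmtAux.conv_subset_conv fun i =>
        StmtAux.mem_conv_of_hull (h ▸ StmtAux.self_mem X i)
    · exact StmtAux.conv_subset_conv fun j =>
        StmtAux.mem_conv_of_hull (h.symm ▸ StmtAux.self_mem Y j)
  · exact ⟨StmtAux.affind_transfer' X Y h, StmtAux.affind_transfer' Y X h.symm⟩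
end

section
/- Let S be a conditional simplex in (L⁰)^d such that S = conv(X₁, …, X_N) = conv(Y₁, …, Y_N), where both families X₁, …, X_N and Y₁, …, Y_N are affinely independent. Then σ({X₁, …, X_N}) = σ({Y₁, …, Y_N}). -/
open MeasureTheory Filter

/-!
Write `Y = Λ X` and `X = M Y` with row-stochastic `L⁰`-matrices `Λ` and `M`. Then `X = (M Λ) X`
with `M Λ` row-stochastic, so affine independence of `X` forces `M Λ = 1`, hence `Λ M = 1` by
commutativity of `L⁰`. A nonnegative row-stochastic matrix with a nonnegative inverse has, in
every row, entries that are orthogonal idempotents summing to `1`; in `L⁰` these are the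
indicators of a partition `(Aᵢ)`. So each `Yⱼ = Σᵢ 1_{Aᵢ} Xᵢ` lies in `σ({X₁, …, X_N})`, and
symmetrically each `Xᵢ` lies in `σ({Y₁, …, Y_N})`.
-/

namespace Matrix

variable {ι R M : Type*} [Fintype ι]

theorem sum_mul_apply_smul [CommSemiring R] [AddCommMonoid M] [Module R M]
    (A B : Matrix ι ι R) (v : ι → M) (i : ι) :
    ∑ k, (A * B) i k • v k = ∑ j, A i j • ∑ k, B j k • v k := by
  simp only [mul_apply, Finset.sum_smul, Finset.smul_sum, smul_smul]
  exact Finset.sum_comm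

variable [CommRing R] [PartialOrder R] [IsOrderedRing R] [DecidableEq ι] {A B : Matrix ι ι R}

theorem mul_entry_eq_zero_of_mul_eq_one (hA : ∀ i j, 0 ≤ A i j) (hB : ∀ i j, 0 ≤ B i j)
    (hAB : A * B = 1) {i l : ι} (hil : i ≠ l) (j : ι) : A i j * B j l = 0 := by
  have hsum : ∑ j, A i j * B j l = 0 := by rw [← mul_apply, hAB, one_apply_ne hil]
  exact (Finset.sum_eq_zero_iff_of_nonneg fun j _ => mul_nonneg (hA i j) (hB j l)).1 hsum j
    (Finset.mem_univ j)

theorem completeOrthogonalIdempotents_of_mul_eq_one (hA : ∀ i j, 0 ≤ A i j)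
    (hB : ∀ i j, 0 ≤ B i j) (hA1 : A *ᵥ 1 = 1) (hAB : A * B = 1) (i : ι) :
    CompleteOrthogonalIdempotents (A i) := by
  have hBA : B * A = 1 := mul_eq_one_comm.1 hAB
  have hB1 : B *ᵥ 1 = 1 :=
    calc B *ᵥ 1 = B *ᵥ (A *ᵥ 1) := by rw [hA1]
      _ = 1 := by rw [mulVec_mulVec, hBA, one_mulVec]
  have row_sum {C : Matrix ι ι R} (hC : C *ᵥ 1 = 1) (j : ι) : ∑ k, C j k = 1 := by
    simpa [mulVec, dotProduct] using congrFun hC j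
  have hdiag (j : ι) : A i j = A i j * B j i := by
    calc A i j = ∑ l, A i j * B j l := by rw [← Finset.mul_sum, row_sum hB1, mul_one]
      _ = A i j * B j i := Finset.sum_eq_single i
          (fun l _ hl => mul_entry_eq_zero_of_mul_eq_one hA hB hAB (Ne.symm hl) j)
          (fun h => absurd (Finset.mem_univ i) h)
  refine CompleteOrthogonalIdempotents.iff_ortho_complete.2 ⟨fun j k hjk => ?_, row_sum hA1 i⟩
  change A i j * A i k = 0
  rw [hdiag j, mul_assoc, mul_entry_eq_zero_of_mul_eq_one hB hA hBA hjk i, mul_zero]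

end Matrix

namespace MeasureTheory

theorem prob_iUnion_eq_one_iff_ae {Ω : Type*} [MeasurableSpace Ω] {P : Measure Ω}
    [IsProbabilityMeasure P] {ι : Type*} [Countable ι]
    {A : ι → Set Ω} (hA : ∀ i, MeasurableSet (A i)) :
    P (⋃ i, A i) = 1 ↔ ∀ᵐ ω ∂P, ∃ i, ω ∈ A i := by
  rw [← prob_compl_eq_zero_iff (MeasurableSet.iUnion hA), measure_eq_zero_iff_ae_notMem]
  simp

end MeasureTheory

namespace L0

open Matrix

variable {Ω : Type*} [MeasurableSpace Ω] {P : Measure Ω}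

instance : NatCast (L0 P) := ⟨fun n => AEEqFun.const Ω (n : ℝ)⟩

instance : IntCast (L0 P) := ⟨fun n => AEEqFun.const Ω (n : ℝ)⟩

instance instCommRing : CommRing (L0 P) :=
  AEEqFun.toGerm_injective.commRing _ AEEqFun.zero_toGerm AEEqFun.one_toGerm
    AEEqFun.add_toGerm AEEqFun.mul_toGerm AEEqFun.neg_toGerm AEEqFun.sub_toGerm
    (fun _ _ => AEEqFun.smul_toGerm _ _) (fun _ _ => AEEqFun.smul_toGerm _ _)
    AEEqFun.pow_toGerm (fun _ => rfl) (fun _ => rfl)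

instance : IsOrderedRing (L0 P) :=
  Function.Injective.isOrderedRing AEEqFun.toGerm AEEqFun.zero_toGerm AEEqFun.one_toGerm
    AEEqFun.add_toGerm AEEqFun.mul_toGerm Iff.rfl

theorem coeFn_ind {A : Set Ω} (hA : MeasurableSet A) :
    ⇑(ind P A) =ᵐ[P] A.indicator fun _ => 1 := by
  rw [ind, dif_pos hA]
  exact AEEqFun.coeFn_mk _ _

theorem ind_empty : ind P (∅ : Set Ω) = 0 := by
  simp only [ind, dif_pos MeasurableSet.empty, Set.indicator_empty]
  rfl

theorem ind_inter {A B : Set Ω} (hA : MeasurableSet A) (hB : MeasurableSet B) :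
    ind P (A ∩ B) = ind P A * ind P B := by
  rw [ind, ind, ind, dif_pos hA, dif_pos hB, dif_pos (hA.inter hB), AEEqFun.mk_mul_mk]
  exact AEEqFun.mk_eq_mk.2 (.of_eq (Set.inter_indicator_one ..))

theorem measure_eq_zero_of_ind_eq_zero {A : Set Ω} (hA : MeasurableSet A) (h : ind P A = 0) :
    P A = 0 := by
  have hzero := (coeFn_ind hA).symm.trans (h ▸ AEEqFun.coeFn_zero)
  exact measure_eq_zero_iff_ae_notMem.2 <| hzero.mono fun ω hω hωA => by
    simp [Set.indicator_of_mem hωA] at hω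

theorem exists_ind_eq_of_isIdempotentElem {e : L0 P} (he : IsIdempotentElem e) :
    ∃ A, MeasurableSet A ∧ ind P A = e := by
  have hA : MeasurableSet {ω | e ω = 1} := e.measurable (measurableSet_singleton 1)
  refine ⟨_, hA, AEEqFun.ext ?_⟩
  filter_upwards [coeFn_ind hA, AEEqFun.coeFn_mul e e] with ω hind hmul
  rw [he.eq, Pi.mul_apply] at hmul
  rcases IsIdempotentElem.iff_eq_zero_or_one.1 hmul.symm with h0 | h1
  · rw [hind, Set.indicator_of_notMem (by simp [h0]), h0]
  · rw [hind, Set.indicator_of_mem (by exact h1), h1]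

theorem mem_sigmaHull_of_fin_partition {d N : ℕ} {A : Fin N → Set Ω}
    (hA : ∀ i, MeasurableSet (A i)) (hdisj : Pairwise fun i j => P (A i ∩ A j) = 0)
    (hcover : P (⋃ i, A i) = 1) {X : Fin N → Fin d → L0 P} {Z : Fin d → L0 P}
    (hZ : ∀ i k, ind P (A i) * Z k = ind P (A i) * X i k) : Z ∈ sigmaHull P (Set.range X) := by
  -- pad with empty sets; the dummy vertex `X i₀` exists because the `A i` cover a non-null set
  obtain ⟨ω, hω⟩ := nonempty_of_measure_ne_zero (hcover ▸ one_ne_zero)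
  obtain ⟨i₀, -⟩ := Set.mem_iUnion.1 hω
  let A' : ℕ → Set Ω := fun n => if h : n < N then A ⟨n, h⟩ else ∅
  let X' : ℕ → Fin d → L0 P := fun n => if h : n < N then X ⟨n, h⟩ else X i₀
  have hU : ⋃ n, A' n = ⋃ i, A i := by
    ext ω
    simp [A', Fin.exists_iff, Set.mem_dite_empty_right]
  refine ⟨A', X', ⟨fun n => ?_, fun n m hnm => ?_, hU ▸ hcover⟩, fun n => ?_, fun k n => ?_⟩
  · simp only [A']
    split_ifs
    exacts [hA _, .empty]
  · simp only [A']
    split_ifs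
    · exact hdisj fun h => hnm (Fin.mk.inj_iff.1 h)
    all_goals simp
  · simp only [X']
    split_ifs <;> exact Set.mem_range_self _
  · simp only [A', X']
    split_ifs
    exacts [hZ _ k, by rw [ind_empty, zero_mul, zero_mul]]

theorem sigmaHull_subset_sigmaHull [IsProbabilityMeasure P] {d : ℕ} {C D : Set (Fin d → L0 P)}
    (h : C ⊆ sigmaHull P D) : sigmaHull P C ⊆ sigmaHull P D := by
  rintro Z ⟨B, W, hB, hWC, hZ⟩
  choose A V hA hVD hW using fun m => h (hWC m)
  let A' : ℕ → Set Ω := fun n => B n.unpair.1 ∩ A n.unpair.1 n.unpair.2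
  have hmeas (n : ℕ) : MeasurableSet (A' n) := (hB.meas _).inter ((hA _).meas _)
  refine ⟨A', fun n => V n.unpair.1 n.unpair.2, ⟨hmeas, fun n n' hnn' => ?_, ?_⟩,
    fun n => hVD _ _, fun k n => ?_⟩
  · by_cases hm : n.unpair.1 = n'.unpair.1
    · have hi : n.unpair.2 ≠ n'.unpair.2 := fun hi =>
        hnn' (by rw [← Nat.pair_unpair n, ← Nat.pair_unpair n', hm, hi])
      refine measure_mono_null ?_ ((hA n.unpair.1).disj _ _ hi)
      exact Set.inter_subset_inter Set.inter_subset_right (hm ▸ Set.inter_subset_right)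
    · exact measure_mono_null (Set.inter_subset_inter Set.inter_subset_left Set.inter_subset_left)
        (hB.disj _ _ hm)
  · rw [prob_iUnion_eq_one_iff_ae hmeas]
    filter_upwards [(prob_iUnion_eq_one_iff_ae hB.meas).1 hB.full,
      ae_all_iff.2 fun m => (prob_iUnion_eq_one_iff_ae (hA m).meas).1 (hA m).full]
      with ω ⟨m, hm⟩ hω
    obtain ⟨i, hi⟩ := hω m
    exact ⟨Nat.pair m i, by simp [A', Nat.unpair_pair, hm, hi]⟩
  · rw [ind_inter (hB.meas _) ((hA _).meas _)]
    linear_combination ind P (A n.unpair.1 n.unpair.2) * hZ k n.unpair.1 +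
      ind P (B n.unpair.1) * hW n.unpair.1 k n.unpair.2

theorem sum_smul_mem_sigmaHull [IsProbabilityMeasure P] {d N : ℕ} {e : Fin N → L0 P}
    (he : CompleteOrthogonalIdempotents e) (X : Fin N → Fin d → L0 P) :
    ∑ i, e i • X i ∈ sigmaHull P (Set.range X) := by
  choose A hA hAe using fun i => exists_ind_eq_of_isIdempotentElem (he.idem i)
  have hcompl : MeasurableSet (⋃ i, A i)ᶜ := (MeasurableSet.iUnion hA).compl
  refine mem_sigmaHull_of_fin_partition hA (fun i j hij => ?_) ?_ fun i k => ?_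
  · apply measure_eq_zero_of_ind_eq_zero ((hA i).inter (hA j))
    rw [ind_inter (hA i) (hA j), hAe, hAe, he.ortho hij]
  · rw [← prob_compl_eq_zero_iff (MeasurableSet.iUnion hA)]
    apply measure_eq_zero_of_ind_eq_zero hcompl
    calc ind P (⋃ i, A i)ᶜ = ∑ i, ind P ((⋃ i, A i)ᶜ ∩ A i) := by
          simp_rw [ind_inter hcompl (hA _), ← Finset.mul_sum, hAe, he.complete, mul_one]
      _ = 0 := Finset.sum_eq_zero fun i _ => by
          rw [Set.disjoint_iff_inter_eq_empty.1
            (Set.disjoint_compl_left_iff_subset.2 (Set.subset_iUnion A i)), ind_empty]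
  · rw [hAe, Finset.sum_apply, Finset.mul_sum]
    simp only [Pi.smul_apply, smul_eq_mul, ← mul_assoc, he.mul_eq]
    simp

theorem mem_conv_self {d : ℕ} {ι : Type*} [Fintype ι] [DecidableEq ι] (X : ι → Fin d → L0 P)
    (j : ι) : X j ∈ conv P X :=
  ⟨Pi.single j 1, fun i => by rw [Pi.single_apply]; split_ifs <;> simp, by simp,
    by simp [Pi.single_apply, ite_smul]⟩

theorem exists_matrix_of_forall_mem_conv {d N : ℕ} {X Y : Fin N → Fin d → L0 P}
    (h : ∀ j, Y j ∈ conv P X) :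
    ∃ Λ : Matrix (Fin N) (Fin N) (L0 P),
      (∀ i j, 0 ≤ Λ i j) ∧ Λ *ᵥ 1 = 1 ∧ ∀ j, ∑ i, Λ j i • X i = Y j := by
  choose Λ hΛ0 hΛ1 hΛ using h
  exact ⟨Λ, hΛ0, funext fun j => by simp [mulVec, dotProduct, hΛ1], fun j => (hΛ j).symm⟩

theorem AffInd.eq_zero_of_sum_eq_zero {d N : ℕ} {X : Fin N → Fin d → L0 P} (hX : AffInd P X)
    {μ : Fin N → L0 P} (hμ : ∑ i, μ i = 0) (hμX : ∑ i, μ i • X i = 0) : μ = 0 := by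
  rcases N with _ | _ | m
  · exact hX.elim
  · funext i
    fin_cases i
    simpa using hμ
  · rw [Fin.sum_univ_castSucc] at hμ hμX
    have hlast : μ (Fin.last _) = -∑ i : Fin (m + 1), μ i.castSucc := by linear_combination hμ
    have hinit : ∀ i : Fin (m + 1), μ i.castSucc = 0 := hX _ <| by
      rw [hlast, neg_smul, ← sub_eq_add_neg] at hμX
      simpa only [smul_sub, Finset.sum_sub_distrib, ← Finset.sum_smul] using hμX
    funext i
    induction i using Fin.lastCases with
    | last => simp [hlast, hinit]
    | cast i => exact hinit i

theorem AffInd.eq_one_of_sum_smul_eq {d N : ℕ} {X : Fin N → Fin d → L0 P} (hX : AffInd P X)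
    {C : Matrix (Fin N) (Fin N) (L0 P)} (hC : C *ᵥ 1 = 1) (hCX : ∀ i, ∑ j, C i j • X j = X i) :
    C = 1 := by
  refine Matrix.ext fun i j => ?_
  have hrow : ∑ j, C i j = 1 := by simpa [mulVec, dotProduct] using congrFun hC i
  have := hX.eq_zero_of_sum_eq_zero (μ := C i - (1 : Matrix (Fin N) (Fin N) (L0 P)) i)
    (by simp [Finset.sum_sub_distrib, one_apply, hrow])
    (by simp [sub_smul, Finset.sum_sub_distrib, hCX, one_apply, ite_smul])
  exact sub_eq_zero.1 (congrFun this j)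

end L0

open MeasureTheory in
theorem stmt_3_general {Ω : Type*} [MeasurableSpace Ω] (P : Measure Ω) [IsProbabilityMeasure P]
    {d N : ℕ} (X Y : Fin N → Fin d → L0 P)
    (hX : L0.AffInd P X)
    (h : L0.conv P X = L0.conv P Y) :
    L0.sigmaHull P (Set.range X) = L0.sigmaHull P (Set.range Y) := by
  obtain ⟨Λ, hΛ0, hΛ1, hΛ⟩ :=
    L0.exists_matrix_of_forall_mem_conv fun j => h ▸ L0.mem_conv_self (P := P) Y j
  obtain ⟨M, hM0, hM1, hM⟩ :=
    L0.exists_matrix_of_forall_mem_conv fun i => h.symm ▸ L0.mem_conv_self (P := P) X i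
  have hMΛ : M * Λ = 1 := hX.eq_one_of_sum_smul_eq (by rw [← Matrix.mulVec_mulVec, hΛ1, hM1])
    fun i => by simp_rw [Matrix.sum_mul_apply_smul, hΛ, hM]
  have hΛM : Λ * M = 1 := mul_eq_one_comm.1 hMΛ
  apply subset_antisymm <;> apply L0.sigmaHull_subset_sigmaHull <;> rintro _ ⟨i, rfl⟩
  · rw [← hM i]
    exact L0.sum_smul_mem_sigmaHull
      (Matrix.completeOrthogonalIdempotents_of_mul_eq_one hM0 hΛ0 hM1 hMΛ i) Y
  · rw [← hΛ i]
    exact L0.sum_smul_mem_sigmaHull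
      (Matrix.completeOrthogonalIdempotents_of_mul_eq_one hΛ0 hM0 hΛ1 hΛM i) X

open MeasureTheory in
/-- two affinely independent families spanning the same conditional simplex
have the same σ-stable hull. -/
theorem stmt_3 {Ω : Type*} [MeasurableSpace Ω] (P : Measure Ω) [IsProbabilityMeasure P]
    {d N : ℕ} (X Y : Fin N → Fin d → L0 P)
    (hX : L0.AffInd P X) (hY : L0.AffInd P Y)
    (h : L0.conv P X = L0.conv P Y) :
    L0.sigmaHull P (Set.range X) = L0.sigmaHull P (Set.range Y) :=
  stmt_3_general P X Y hX h
end

section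
/- Let S = conv(X₁, …, X_N) be a conditional simplex in (L⁰)^d and X ∈ S. Then X ∈ σ({X₁, …, X_N}) if and only if there do not exist Y, Z ∈ S with Y ≠ X, Z ≠ X, and λ ∈ L⁰ with 0 < λ < 1 P-almost surely, such that X = λY + (1−λ)Z. -/
open MeasureTheory Filter

section ExtremalAux
open MeasureTheory

variable {Ω : Type*} [MeasurableSpace Ω] {P : Measure Ω}

private lemma ae_coeFn_sum {ι : Type*} (s : Finset ι) (f : ι → L0 P) :
    ∀ᵐ ω ∂P, (∑ i ∈ s, f i) ω = ∑ i ∈ s, f i ω := by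
  classical
  induction s using Finset.induction_on with
  | empty =>
      have := AEEqFun.coeFn_zero (α := Ω) (μ := P) (β := ℝ)
      filter_upwards [this] with ω h
      simpa using h
  | @insert a s ha ih =>
      rw [Finset.sum_insert ha]
      filter_upwards [AEEqFun.coeFn_add (f a) (∑ i ∈ s, f i), ih] with ω h1 h2
      rw [Finset.sum_insert ha, h1, Pi.add_apply, h2]

private lemma ae_nonneg {f : L0 P} (h : 0 ≤ f) : ∀ᵐ ω ∂P, 0 ≤ f ω := by
  have h1 : ⇑(0 : L0 P) ≤ᵐ[P] ⇑f := AEEqFun.coeFn_le.mpr h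
  filter_upwards [h1, AEEqFun.coeFn_zero (α := Ω) (μ := P) (β := ℝ)] with ω h1 h2
  rw [h2] at h1; exact h1

private lemma ae_sum_one {N : ℕ} {lam : Fin N → L0 P} (h : (∑ i, lam i) = 1) :
    ∀ᵐ ω ∂P, ∑ i, lam i ω = 1 := by
  have h1 := ae_coeFn_sum (Finset.univ) lam
  rw [h] at h1
  filter_upwards [h1, AEEqFun.coeFn_one (α := Ω) (μ := P) (β := ℝ)] with ω h1 h2
  rw [← h1, h2]; rfl

private lemma ae_eval {d N : ℕ} (X : Fin N → Fin d → L0 P) (lam : Fin N → L0 P) :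
    ∀ᵐ ω ∂P, ∀ k, (∑ t, lam t • X t) k ω = ∑ t, lam t ω * X t k ω := by
  rw [ae_all_iff]
  intro k
  have h : (∑ t, lam t • X t) k = ∑ t, lam t * X t k := by
    rw [Finset.sum_apply]
    rfl
  rw [h]
  have h3 : ∀ᵐ ω ∂P, ∀ t, (lam t * X t k) ω = lam t ω * X t k ω :=
    ae_all_iff.mpr fun t => AEEqFun.coeFn_mul (lam t) (X t k)
  filter_upwards [ae_coeFn_sum Finset.univ (fun t => lam t * X t k), h3] with ω h2 h3
  rw [h2]; exact Finset.sum_congr rfl fun t _ => h3 t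

private lemma ind_coeFn {A : Set Ω} (h : MeasurableSet A) :
    ⇑(L0.ind P A) =ᵐ[P] A.indicator fun _ => (1:ℝ) := by
  rw [L0.ind, dif_pos h]
  exact AEEqFun.coeFn_mk _ _

end ExtremalAux
section ExtremalAux2
open MeasureTheory

variable {Ω : Type*} [MeasurableSpace Ω] {P : Measure Ω}

private lemma coeff_unique {d N : ℕ} (X : Fin N → Fin d → L0 P) (hX : L0.AffInd P X)
    (a b : Fin N → L0 P) (ha : (∑ i, a i) = 1) (hb : (∑ i, b i) = 1)
    (hab : (∑ i, a i • X i) = ∑ i, b i • X i) : a = b := by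
  match N, X, hX with
  | 1, X, _ =>
      have h1 : a 0 = 1 := by simpa using ha
      have h2 : b 0 = 1 := by simpa using hb
      funext i
      have hi : i = 0 := Subsingleton.elim _ _
      rw [hi, h1, h2]
  | (m+2), X, hX =>
      set c : Fin (m+1) → L0 P := fun p => a p.castSucc - b p.castSucc with hc
      have key : (∑ p : Fin (m+1), c p • (X p.castSucc - X (Fin.last (m+1)))) = 0 := by
        funext k
        show _ = (0 : L0 P)
        apply AEEqFun.ext
        have evL := ae_eval (fun p : Fin (m+1) => X p.castSucc - X (Fin.last (m+1))) c
        have evA := ae_eval X a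
        have evB := ae_eval X b
        have habk : ∀ᵐ ω ∂P, (∑ i, a i • X i) k ω = (∑ i, b i • X i) k ω := by
          rw [hab]; exact Filter.Eventually.of_forall fun _ => rfl
        have hsa := ae_sum_one ha
        have hsb := ae_sum_one hb
        have hcpt : ∀ᵐ ω ∂P, ∀ p : Fin (m+1), c p ω = a p.castSucc ω - b p.castSucc ω :=
          ae_all_iff.mpr fun p => AEEqFun.coeFn_sub _ _
        have hvpt : ∀ᵐ ω ∂P, ∀ p : Fin (m+1),
            (X p.castSucc k - X (Fin.last (m+1)) k) ω
              = X p.castSucc k ω - X (Fin.last (m+1)) k ω :=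
          ae_all_iff.mpr fun p => AEEqFun.coeFn_sub _ _
        filter_upwards [evL, evA, evB, habk, hsa, hsb, hcpt, hvpt,
          AEEqFun.coeFn_zero (α := Ω) (μ := P) (β := ℝ)]
          with ω evL evA evB habk hsa hsb hcpt hvpt h0
        rw [evL k, h0, Pi.zero_apply]
        have e1 : ∀ p : Fin (m+1),
            c p ω * ((fun p : Fin (m+1) => X p.castSucc - X (Fin.last (m+1))) p) k ω
              = (a p.castSucc ω - b p.castSucc ω)
                * (X p.castSucc k ω - X (Fin.last (m+1)) k ω) := by
          intro p
          have : ((fun p : Fin (m+1) => X p.castSucc - X (Fin.last (m+1))) p) k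
              = X p.castSucc k - X (Fin.last (m+1)) k := rfl
          rw [this, hcpt p, hvpt p]
        rw [Finset.sum_congr rfl fun p _ => e1 p]
        -- now pure real arithmetic
        have hA := habk
        rw [evA k, evB k] at hA
        rw [Fin.sum_univ_castSucc (f := fun t : Fin (m+2) => (a t : Ω → ℝ) ω * (X t k : Ω → ℝ) ω),
          Fin.sum_univ_castSucc (f := fun t : Fin (m+2) => (b t : Ω → ℝ) ω * (X t k : Ω → ℝ) ω)] at hA
        rw [Fin.sum_univ_castSucc] at hsa hsb
        have hSa : (∑ p : Fin (m+1), a p.castSucc ω)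
            = 1 - a (Fin.last (m+1)) ω := by linarith
        have hSb : (∑ p : Fin (m+1), b p.castSucc ω)
            = 1 - b (Fin.last (m+1)) ω := by linarith
        simp only [sub_mul, mul_sub, Finset.sum_sub_distrib]
        rw [← Finset.sum_mul, ← Finset.sum_mul, hSa, hSb]
        set Xl := X (Fin.last (m+1)) k ω
        linear_combination hA
      have hz := hX c key
      have hcs : ∀ p : Fin (m+1), a p.castSucc = b p.castSucc := fun p =>
        sub_eq_zero.mp (hz p)
      have hlast : a (Fin.last (m+1)) = b (Fin.last (m+1)) := by
        have h := ha.trans hb.symm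
        rw [show (∑ i : Fin (m+2), a i)
            = ∑ p : Fin (m+1), a p.castSucc + a (Fin.last (m+1)) from
            Fin.sum_univ_castSucc a,
          show (∑ i : Fin (m+2), b i)
            = ∑ p : Fin (m+1), b p.castSucc + b (Fin.last (m+1)) from
            Fin.sum_univ_castSucc b,
          Finset.sum_congr rfl fun p _ => hcs p] at h
        exact add_left_cancel h
      funext i
      induction i using Fin.lastCases with
      | last => exact hlast
      | cast p => exact hcs p

end ExtremalAux2
section ExtremalAux3
open MeasureTheory

variable {Ω : Type*} [MeasurableSpace Ω] {P : Measure Ω}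

private lemma mem_sigmaHull_of_indicator {d N : ℕ} [IsProbabilityMeasure P] (hN : 0 < N)
    (X : Fin N → Fin d → L0 P) (lam : Fin N → L0 P)
    (h1 : (∑ i, lam i) = 1)
    (Hind : ∀ᵐ ω ∂P, ∀ t, lam t ω = 0 ∨ lam t ω = 1) :
    (∑ i, lam i • X i) ∈ L0.sigmaHull P (Set.range X) := by
  classical
  have hm : ∀ t : Fin N, Measurable (lam t : Ω → ℝ) := fun t => (lam t).measurable
  set A : ℕ → Set Ω := fun p =>
    if h : p < N then
      ((lam ⟨p, h⟩) ⁻¹' {1}) ∩ ⋂ (q : Fin N) (_ : q.1 < p), ((lam q) ⁻¹' {1})ᶜ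
    else ∅ with hA
  have hmeasA : ∀ p, MeasurableSet (A p) := by
    intro p
    by_cases h : p < N
    · simp only [hA, dif_pos h]
      exact ((hm _ (measurableSet_singleton _)).inter
        (MeasurableSet.iInter fun q => MeasurableSet.iInter fun _ =>
          (hm q (measurableSet_singleton _)).compl))
    · simp only [hA, dif_neg h]; exact MeasurableSet.empty
  have hAlt : ∀ p : Fin N, A p.1 = ((lam p) ⁻¹' {1}) ∩
      ⋂ (q : Fin N) (_ : q.1 < p.1), ((lam q) ⁻¹' {1})ᶜ := by
    intro p; simp only [hA]; rw [dif_pos p.isLt]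
  have hdisjkey : ∀ p q : ℕ, p < q → A p ∩ A q = ∅ := by
    intro p q hpq
    by_cases hp : p < N
    · by_cases hq : q < N
      · ext ω
        simp only [Set.mem_inter_iff, Set.mem_empty_iff_false, iff_false, not_and]
        intro h1' h2'
        simp only [hA] at h1' h2'
        rw [dif_pos hp] at h1'
        rw [dif_pos hq] at h2'
        have hne : lam ⟨p, hp⟩ ω = 1 := h1'.1
        have := h2'.2
        rw [Set.mem_iInter] at this
        have := this ⟨p, hp⟩
        rw [Set.mem_iInter] at this
        exact (this hpq) hne
      · rw [show A q = ∅ from by simp only [hA, dif_neg hq]]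
        exact Set.inter_empty _
    · rw [show A p = ∅ from by simp only [hA, dif_neg hp]]
      exact Set.empty_inter _
  have hpart : L0.IsPartition P A := by
    refine ⟨hmeasA, ?_, ?_⟩
    · intro p q hpq
      rcases hpq.lt_or_gt with h | h
      · rw [hdisjkey p q h]; simp
      · rw [Set.inter_comm, hdisjkey q p h]; simp
    · have haefull : ∀ᵐ ω ∂P, ω ∈ ⋃ p, A p := by
        filter_upwards [Hind, ae_sum_one h1] with ω Hind hsum
        have hex : ∃ t : Fin N, lam t ω = 1 := by
          by_contra hno
          push_neg at hno
          have : ∀ t : Fin N, lam t ω = 0 := fun t => (Hind t).resolve_right (hno t)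
          rw [Finset.sum_eq_zero fun t _ => this t] at hsum
          norm_num at hsum
        have hTne : (Finset.univ.filter (fun t : Fin N => lam t ω = 1)).Nonempty := by
          obtain ⟨t, ht⟩ := hex
          exact ⟨t, by simp [ht]⟩
        obtain ⟨t0, ht0T, ht0min⟩ :=
          Finset.exists_min_image _ id hTne
        have ht0mem : lam t0 ω = 1 := (Finset.mem_filter.mp ht0T).2
        refine Set.mem_iUnion.mpr ⟨t0.1, ?_⟩
        simp only [hA, dif_pos t0.isLt]
        refine ⟨?_, ?_⟩
        · simpa [Fin.eta] using ht0mem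
        · rw [Set.mem_iInter]
          intro q
          rw [Set.mem_iInter]
          intro hq hq1
          have hqT : q ∈ Finset.univ.filter (fun t : Fin N => lam t ω = 1) := by
            simp only [Finset.mem_filter, Finset.mem_univ, true_and]
            exact hq1
          have := ht0min q hqT
          exact absurd hq (by simpa using not_lt.mpr this)
      have : P (⋃ p, A p)ᶜ = 0 := measure_eq_zero_iff_ae_notMem.mpr (by
        filter_upwards [haefull] with ω h; simpa using h)
      exact (prob_compl_eq_zero_iff (MeasurableSet.iUnion hmeasA)).mp this
  set X' : ℕ → Fin d → L0 P := fun p =>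
    if h : p < N then X ⟨p, h⟩ else X ⟨0, hN⟩ with hX'
  refine ⟨A, X', hpart, fun p => ?_, ?_⟩
  · by_cases h : p < N
    · simp only [hX', dif_pos h]; exact ⟨_, rfl⟩
    · simp only [hX', dif_neg h]; exact ⟨_, rfl⟩
  · intro k p
    apply AEEqFun.ext
    have hL := AEEqFun.coeFn_mul (L0.ind P (A p)) ((∑ i, lam i • X i) k)
    have hR := AEEqFun.coeFn_mul (L0.ind P (A p)) (X' p k)
    filter_upwards [hL, hR, ind_coeFn (P := P) (hmeasA p), ae_eval X lam,
      Hind, ae_sum_one h1] with ω hL hR hI hev Hind hsum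
    rw [hL, hR, Pi.mul_apply, Pi.mul_apply, hI]
    by_cases hω : ω ∈ A p
    · have hp : p < N := by
        by_contra h
        simp only [hA, dif_neg h] at hω
        exact hω
      have hω' : ω ∈ A (⟨p, hp⟩ : Fin N).1 := hω
      rw [hAlt ⟨p, hp⟩] at hω'
      have hlam1 : lam ⟨p, hp⟩ ω = 1 := hω'.1
      have hzero : ∀ q : Fin N, q ≠ ⟨p, hp⟩ → lam q ω = 0 := by
        intro q hq
        rcases Hind q with h0 | h1'
        · exact h0
        · exfalso
          have hnn : ∀ t : Fin N, 0 ≤ lam t ω := by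
            intro t; rcases Hind t with h | h <;> rw [h] <;> norm_num
          have hsub : ({q, ⟨p, hp⟩} : Finset (Fin N)) ⊆ Finset.univ :=
            Finset.subset_univ _
          have hge : (∑ t ∈ ({q, ⟨p, hp⟩} : Finset (Fin N)), lam t ω)
              ≤ ∑ t : Fin N, lam t ω :=
            Finset.sum_le_sum_of_subset_of_nonneg hsub fun t _ _ => hnn t
          rw [Finset.sum_pair hq] at hge
          rw [hsum, h1', hlam1] at hge
          norm_num at hge
      have hW : (∑ i, lam i • X i) k ω = X ⟨p, hp⟩ k ω := by
        rw [hev k]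
        rw [Finset.sum_eq_single (⟨p, hp⟩ : Fin N)]
        · rw [hlam1, one_mul]
        · intro q _ hq; rw [hzero q hq, zero_mul]
        · intro h; exact absurd (Finset.mem_univ _) h
      have hX'p : X' p k = X ⟨p, hp⟩ k := by simp only [hX', dif_pos hp]
      rw [hW, hX'p]
    · rw [Set.indicator_of_notMem hω]
      ring

end ExtremalAux3
set_option maxHeartbeats 2000000 in
open MeasureTheory in
/-- characterization of the extremal points of a conditional simplex. -/
theorem stmt_4 {Ω : Type*} [MeasurableSpace Ω] (P : Measure Ω) [IsProbabilityMeasure P]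
    {d N : ℕ} (X : Fin N → Fin d → L0 P) (hX : L0.AffInd P X)
    (W : Fin d → L0 P) (hW : W ∈ L0.conv P X) :
    W ∈ L0.sigmaHull P (Set.range X) ↔
      ¬ ∃ (Y Z : Fin d → L0 P) (lam : L0 P), Y ∈ L0.conv P X ∧ Z ∈ L0.conv P X ∧
        Y ≠ W ∧ Z ≠ W ∧ (∀ᵐ ω ∂P, 0 < lam ω ∧ lam ω < 1) ∧
        W = lam • Y + (1 - lam) • Z := by
  classical
  rcases Nat.eq_zero_or_pos N with hN0 | hN
  · subst hN0
    simp only [L0.AffInd] at hX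
  obtain ⟨lam, hlam0, hlam1, hWe⟩ := hW
  constructor
  · rintro ⟨A, X', hpart, hmem, hglue⟩
    rintro ⟨Y, Z, lb, ⟨muY, hY0, hY1, hYe⟩, ⟨muZ, hZ0, hZ1, hZe⟩, hYW, hZW, hlb, hdec⟩
    apply hYW
    choose jf hjf using hmem
    set S : Fin N → Set Ω := fun t => ⋃ p ∈ {p : ℕ | jf p = t}, A p with hS
    have hSmeas : ∀ t, MeasurableSet (S t) := by
      intro t
      simp only [hS]
      exact MeasurableSet.biUnion (Set.to_countable _) fun p _ => hpart.meas p
    set alpha : Fin N → L0 P := fun t =>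
      AEEqFun.mk ((S t).indicator fun _ => (1:ℝ))
        ((measurable_const.indicator (hSmeas t)).aestronglyMeasurable) with halpha
    have halphaco : ∀ᵐ ω ∂P, ∀ t, alpha t ω = (S t).indicator (fun _ => (1:ℝ)) ω := by
      rw [ae_all_iff]
      intro t
      exact AEEqFun.coeFn_mk _ _
    have hdisj : ∀ᵐ ω ∂P, ∀ p q : ℕ, p ≠ q → ¬(ω ∈ A p ∧ ω ∈ A q) := by
      rw [ae_all_iff]; intro p; rw [ae_all_iff]; intro q
      by_cases hpq : p = q
      · filter_upwards with ω h; exact absurd hpq h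
      · filter_upwards [measure_eq_zero_iff_ae_notMem.mp (hpart.disj p q hpq)] with ω h _ hc
        exact h hc
    have hfull : ∀ᵐ ω ∂P, ∃ p, ω ∈ A p := by
      have h0 : P (⋃ p, A p)ᶜ = 0 :=
        (prob_compl_eq_zero_iff (MeasurableSet.iUnion hpart.meas)).mpr hpart.full
      filter_upwards [measure_eq_zero_iff_ae_notMem.mp h0] with ω h
      simpa [Set.mem_iUnion] using h
    have hglue' : ∀ᵐ ω ∂P, ∀ (p : ℕ) (k : Fin d),
        (A p).indicator (fun _ => (1:ℝ)) ω * W k ω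
          = (A p).indicator (fun _ => (1:ℝ)) ω * X (jf p) k ω := by
      rw [ae_all_iff]; intro p; rw [ae_all_iff]; intro k
      have h : L0.ind P (A p) * W k = L0.ind P (A p) * X (jf p) k := by
        have h0 : L0.ind P (A p) * W k = L0.ind P (A p) * X' p k := hglue k p
        rw [← hjf p] at h0
        exact h0
      have h1 := AEEqFun.coeFn_mul (L0.ind P (A p)) (W k)
      have h2 := AEEqFun.coeFn_mul (L0.ind P (A p)) (X (jf p) k)
      filter_upwards [h1, h2, ind_coeFn (P := P) (hpart.meas p)] with ω h1 h2 h3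
      have hEq : (L0.ind P (A p) * W k) ω = (L0.ind P (A p) * X (jf p) k) ω := by rw [h]
      rw [h1, h2, Pi.mul_apply, Pi.mul_apply, h3] at hEq
      exact hEq
    have hkey : ∀ᵐ ω ∂P, ∃ p0 : Fin N,
        (∀ t, alpha t ω = if t = p0 then 1 else 0) ∧ (∀ k, W k ω = X p0 k ω) := by
      filter_upwards [hglue', hdisj, hfull, halphaco] with ω hglue' hdisj hfull halphaco
      obtain ⟨p, hp⟩ := hfull
      refine ⟨jf p, ?_, ?_⟩
      · intro t
        rw [halphaco t]
        by_cases ht : t = jf p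
        · have hmemS : ω ∈ S t :=
            Set.mem_biUnion (show p ∈ {p' : ℕ | jf p' = t} from ht.symm) hp
          rw [if_pos ht, Set.indicator_of_mem hmemS]
        · rw [if_neg ht, Set.indicator_of_notMem]
          intro hmem'
          simp only [hS, Set.mem_iUnion] at hmem'
          obtain ⟨q, hq, hωq⟩ := hmem'
          have hqp : q = p := by
            by_contra hne
            exact hdisj q p hne ⟨hωq, hp⟩
          exact ht (by rw [← hq, hqp])
      · intro k
        have h := hglue' p k
        rw [Set.indicator_of_mem hp] at h
        simpa using h
    have hWalpha : W = ∑ t, alpha t • X t := by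
      funext k
      apply AEEqFun.ext
      filter_upwards [hkey, ae_eval X alpha] with ω hkey hev
      obtain ⟨p0, ha, hWp⟩ := hkey
      rw [hev k, hWp k]
      rw [Finset.sum_eq_single p0 (fun t _ ht => by rw [ha t, if_neg ht, zero_mul])
        (fun h => absurd (Finset.mem_univ _) h), ha p0, if_pos rfl, one_mul]
    have halphasum : (∑ t, alpha t) = 1 := by
      apply AEEqFun.ext
      filter_upwards [ae_coeFn_sum Finset.univ alpha, hkey,
        AEEqFun.coeFn_one (α := Ω) (μ := P) (β := ℝ)] with ω h1 hkey hone
      obtain ⟨p0, ha, _⟩ := hkey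
      have hone2 : (1 : L0 P) ω = (1:ℝ) := hone
      rw [h1, hone2]
      rw [Finset.sum_eq_single p0 (fun t _ ht => by rw [ha t, if_neg ht])
        (fun h => absurd (Finset.mem_univ _) h), ha p0, if_pos rfl]
    set aC : Fin N → L0 P := fun t => lb * muY t + (1 - lb) * muZ t with haC
    have haCco : ∀ᵐ ω ∂P, ∀ t, aC t ω = lb ω * muY t ω + (1 - lb ω) * muZ t ω := by
      rw [ae_all_iff]; intro t
      have h1 := AEEqFun.coeFn_add (lb * muY t) ((1 - lb) * muZ t)
      have h2 := AEEqFun.coeFn_mul lb (muY t)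
      have h3 := AEEqFun.coeFn_mul (1 - lb) (muZ t)
      have h4 := AEEqFun.coeFn_sub (1 : L0 P) lb
      filter_upwards [h1, h2, h3, h4,
        AEEqFun.coeFn_one (α := Ω) (μ := P) (β := ℝ)] with ω h1 h2 h3 h4 hone
      have hone2 : (1 : L0 P) ω = (1:ℝ) := hone
      have he : aC t = lb * muY t + (1 - lb) * muZ t := by simp only [haC]
      rw [he, h1, Pi.add_apply, h2, Pi.mul_apply, h3, Pi.mul_apply, h4, Pi.sub_apply, hone2]
    have haCsum : (∑ t, aC t) = 1 := by
      apply AEEqFun.ext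
      filter_upwards [ae_coeFn_sum Finset.univ aC, haCco, ae_sum_one hY1, ae_sum_one hZ1,
        AEEqFun.coeFn_one (α := Ω) (μ := P) (β := ℝ)] with ω h1 hco hsY hsZ hone
      have hone2 : (1 : L0 P) ω = (1:ℝ) := hone
      rw [h1, hone2, Finset.sum_congr rfl fun t _ => hco t, Finset.sum_add_distrib,
        ← Finset.mul_sum, ← Finset.mul_sum, hsY, hsZ]
      ring
    have haCrep : (∑ t, aC t • X t) = ∑ t, alpha t • X t := by
      rw [← hWalpha]
      funext k
      apply AEEqFun.ext
      have e : W k = lb * Y k + (1 - lb) * Z k := by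
        rw [hdec]; rfl
      have h1 := AEEqFun.coeFn_add (lb * Y k) ((1 - lb) * Z k)
      have h2 := AEEqFun.coeFn_mul lb (Y k)
      have h3 := AEEqFun.coeFn_mul (1 - lb) (Z k)
      have h4 := AEEqFun.coeFn_sub (1 : L0 P) lb
      filter_upwards [ae_eval X aC, haCco, ae_eval X muY, ae_eval X muZ,
        h1, h2, h3, h4, AEEqFun.coeFn_one (α := Ω) (μ := P) (β := ℝ)]
        with ω hev hco hevY hevZ h1 h2 h3 h4 hone
      have hone2 : (1 : L0 P) ω = (1:ℝ) := hone
      have hYk : Y k ω = ∑ t, muY t ω * X t k ω := by rw [hYe]; exact hevY k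
      have hZk : Z k ω = ∑ t, muZ t ω * X t k ω := by rw [hZe]; exact hevZ k
      have hWk : W k ω = lb ω * (∑ t, muY t ω * X t k ω)
          + (1 - lb ω) * (∑ t, muZ t ω * X t k ω) := by
        rw [e, h1, Pi.add_apply, h2, Pi.mul_apply, h3, Pi.mul_apply, h4, Pi.sub_apply,
          hone2, hYk, hZk]
      rw [hev k, hWk, Finset.mul_sum, Finset.mul_sum, ← Finset.sum_add_distrib]
      refine Finset.sum_congr rfl fun t _ => ?_
      rw [hco t]; ring
    have hac := coeff_unique X hX aC alpha haCsum halphasum haCrep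
    have hfin : ∀ t, muY t = alpha t := by
      have hfe : ∀ᵐ ω ∂P, ∀ t, muY t ω = alpha t ω := by
        have haceq : ∀ᵐ ω ∂P, ∀ t, aC t ω = alpha t ω :=
          ae_all_iff.mpr fun t =>
            Filter.Eventually.of_forall fun ω => by rw [congrFun hac t]
        filter_upwards [hkey, haCco, haceq, hlb, ae_sum_one hY1, ae_sum_one hZ1,
          ae_all_iff.mpr fun t => ae_nonneg (hY0 t),
          ae_all_iff.mpr fun t => ae_nonneg (hZ0 t)]
          with ω hkey hco haceq hlbw hsY hsZ hnnY hnnZ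
        obtain ⟨p0, ha, _⟩ := hkey
        intro t
        have heq : lb ω * muY t ω + (1 - lb ω) * muZ t ω = alpha t ω := by
          rw [← hco t, haceq t]
        have hYle : muY t ω ≤ 1 := by
          have h := Finset.single_le_sum (f := fun s => muY s ω)
            (fun s _ => hnnY s) (Finset.mem_univ t)
          rw [hsY] at h; exact h
        have hZle : muZ t ω ≤ 1 := by
          have h := Finset.single_le_sum (f := fun s => muZ s ω)
            (fun s _ => hnnZ s) (Finset.mem_univ t)
          rw [hsZ] at h; exact h
        rw [ha t] at heq ⊢
        by_cases ht : t = p0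
        · rw [if_pos ht] at heq ⊢
          nlinarith [mul_nonneg hlbw.1.le (sub_nonneg.mpr hYle),
            mul_nonneg (sub_nonneg.mpr hlbw.2.le) (sub_nonneg.mpr hZle),
            hnnY t, hnnZ t, hlbw.1, hlbw.2]
        · rw [if_neg ht] at heq ⊢
          nlinarith [mul_nonneg hlbw.1.le (hnnY t),
            mul_nonneg (sub_nonneg.mpr hlbw.2.le) (hnnZ t),
            hnnY t, hnnZ t, hlbw.1, hlbw.2]
      intro t
      apply AEEqFun.ext
      filter_upwards [hfe] with ω h
      exact h t
    rw [hYe, hWalpha]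
    exact Finset.sum_congr rfl fun t _ => by rw [hfin t]
  · intro hno
    by_contra hns
    apply hno
    -- Step 1: coefficients are not a.e. {0,1}-valued
    have Hnind : ¬ (∀ᵐ ω ∂P, ∀ t, lam t ω = 0 ∨ lam t ω = 1) := by
      intro Hind
      exact hns (by rw [hWe]; exact mem_sigmaHull_of_indicator hN X lam hlam1 Hind)
    -- Step 2: find index i
    set E : Fin N → Set Ω := fun t => {ω | ¬(lam t ω = 0 ∨ lam t ω = 1)} with hE
    have hEmeas : ∀ t, MeasurableSet (E t) := by
      intro t
      have he : E t = ((lam t ⁻¹' {0}) ∪ (lam t ⁻¹' {1}))ᶜ := by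
        ext ω; simp [hE]
      rw [he]
      exact (((lam t).measurable (measurableSet_singleton _)).union
        ((lam t).measurable (measurableSet_singleton _))).compl
    have hEex : ∃ i, P (E i) ≠ 0 := by
      by_contra hall
      push_neg at hall
      apply Hnind
      have h1 : ∀ᵐ ω ∂P, ∀ t, ω ∉ E t :=
        ae_all_iff.mpr fun t => measure_eq_zero_iff_ae_notMem.mp (hall t)
      filter_upwards [h1] with ω h t
      exact not_not.mp (h t)
    obtain ⟨i, hEi⟩ := hEex
    -- Step 3: pigeonhole for j
    have hjex : ∃ j, j ≠ i ∧ P (E i ∩ (lam j ⁻¹' Set.Ioi 0)) ≠ 0 := by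
      by_contra hall
      push_neg at hall
      apply hEi
      rw [measure_eq_zero_iff_ae_notMem]
      have h1 : ∀ᵐ ω ∂P, ∀ j : Fin N, j ≠ i → ω ∉ E i ∩ (lam j ⁻¹' Set.Ioi 0) := by
        rw [ae_all_iff]; intro j
        by_cases hji : j = i
        · filter_upwards with ω h; exact absurd hji h
        · filter_upwards [measure_eq_zero_iff_ae_notMem.mp (hall j hji)] with ω h _
          exact h
      filter_upwards [h1, ae_sum_one hlam1,
        ae_all_iff.mpr fun t => ae_nonneg (hlam0 t)] with ω h1 hsum hnn
      intro hωE
      have hEi' : lam i ω ≠ 0 ∧ lam i ω ≠ 1 := by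
        have : ¬(lam i ω = 0 ∨ lam i ω = 1) := hωE
        push_neg at this; exact this
      have hex2 : ∃ j, j ≠ i ∧ 0 < lam j ω := by
        by_contra hno2
        push_neg at hno2
        have hz : ∀ j : Fin N, j ≠ i → lam j ω = 0 := fun j hji =>
          le_antisymm (hno2 j hji) (hnn j)
        have hsingle : ∑ t : Fin N, lam t ω = lam i ω :=
          Finset.sum_eq_single i (fun t _ ht => hz t ht)
            (fun h => absurd (Finset.mem_univ _) h)
        rw [hsum] at hsingle
        exact hEi'.2 hsingle.symm
      obtain ⟨j, hji, hjpos⟩ := hex2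
      exact h1 j hji ⟨hωE, hjpos⟩
    obtain ⟨j, hji, hF⟩ := hjex
    set F := E i ∩ (lam j ⁻¹' Set.Ioi 0) with hFdef
    have hFmeas : MeasurableSet F :=
      (hEmeas i).inter ((lam j).measurable measurableSet_Ioi)
    -- delta
    set dfun : Ω → ℝ := F.indicator (fun ω => min (lam i ω) (lam j ω) / 2) with hdfun
    have hdmeas : Measurable dfun :=
      (((lam i).measurable.min (lam j).measurable).div_const 2).indicator hFmeas
    set D : L0 P := AEEqFun.mk dfun hdmeas.aestronglyMeasurable with hD
    have hDco : ⇑D =ᵐ[P] dfun := AEEqFun.coeFn_mk _ _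
    have hDne : D ≠ 0 := by
      intro h0
      have hz : ∀ᵐ ω ∂P, dfun ω = 0 := by
        have : ⇑D =ᵐ[P] ⇑(0 : L0 P) := by rw [h0]
        filter_upwards [hDco, this, AEEqFun.coeFn_zero (α := Ω) (μ := P) (β := ℝ)]
          with ω h1 h2 h3
        rw [← h1, h2, h3]; rfl
      apply hF
      rw [measure_eq_zero_iff_ae_notMem]
      filter_upwards [hz, ae_nonneg (hlam0 i)] with ω hz hnn
      intro hωF
      have hipos : 0 < lam i ω := by
        have h1 : ¬(lam i ω = 0 ∨ lam i ω = 1) := hωF.1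
        push_neg at h1
        exact lt_of_le_of_ne hnn (Ne.symm h1.1)
      have hjpos : 0 < lam j ω := hωF.2
      have : dfun ω = min (lam i ω) (lam j ω) / 2 := by
        rw [hdfun, Set.indicator_of_mem hωF]
      rw [hz] at this
      have hmin : 0 < min (lam i ω) (lam j ω) := lt_min hipos hjpos
      linarith
    -- coefficients
    set muA : Fin N → L0 P :=
      fun t => lam t + (if t = i then D else 0) - (if t = j then D else 0) with hmuA
    set muB : Fin N → L0 P :=
      fun t => lam t - (if t = i then D else 0) + (if t = j then D else 0) with hmuB
    have hiteco : ∀ t : Fin N, ∀ c : Fin N,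
        ⇑(if t = c then D else (0 : L0 P)) =ᵐ[P] fun ω => if t = c then dfun ω else 0 := by
      intro t c
      by_cases h : t = c
      · simp only [if_pos h]
        filter_upwards [hDco] with ω h1
        rw [h1]
      · simp only [if_neg h]
        filter_upwards [AEEqFun.coeFn_zero (α := Ω) (μ := P) (β := ℝ)] with ω h1
        rw [h1]; rfl
    have hmuAco : ∀ᵐ ω ∂P, ∀ t, muA t ω
        = lam t ω + (if t = i then dfun ω else 0) - (if t = j then dfun ω else 0) := by
      rw [ae_all_iff]; intro t
      have h1 := AEEqFun.coeFn_sub (lam t + (if t = i then D else 0))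
        (if t = j then D else (0 : L0 P))
      have h2 := AEEqFun.coeFn_add (lam t) (if t = i then D else (0 : L0 P))
      filter_upwards [h1, h2, hiteco t i, hiteco t j] with ω h1 h2 h3 h4
      have : muA t = lam t + (if t = i then D else 0) - (if t = j then D else 0) := by
        simp only [hmuA]
      rw [this, h1, Pi.sub_apply, h2, Pi.add_apply, h3, h4]
    have hmuBco : ∀ᵐ ω ∂P, ∀ t, muB t ω
        = lam t ω - (if t = i then dfun ω else 0) + (if t = j then dfun ω else 0) := by
      rw [ae_all_iff]; intro t
      have h1 := AEEqFun.coeFn_add (lam t - (if t = i then D else 0))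
        (if t = j then D else (0 : L0 P))
      have h2 := AEEqFun.coeFn_sub (lam t) (if t = i then D else (0 : L0 P))
      filter_upwards [h1, h2, hiteco t i, hiteco t j] with ω h1 h2 h3 h4
      have : muB t = lam t - (if t = i then D else 0) + (if t = j then D else 0) := by
        simp only [hmuB]
      rw [this, h1, Pi.add_apply, h2, Pi.sub_apply, h3, h4]
    have hdkey : ∀ᵐ ω ∂P, 0 ≤ dfun ω ∧ dfun ω ≤ lam i ω ∧ dfun ω ≤ lam j ω := by
      filter_upwards [ae_nonneg (hlam0 i), ae_nonneg (hlam0 j)] with ω hi hj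
      by_cases hω : ω ∈ F
      · rw [hdfun, Set.indicator_of_mem hω]
        have h1 := min_le_left (lam i ω) (lam j ω)
        have h2 := min_le_right (lam i ω) (lam j ω)
        have h3 : 0 ≤ min (lam i ω) (lam j ω) := le_min hi hj
        exact ⟨by linarith, by linarith, by linarith⟩
      · rw [hdfun, Set.indicator_of_notMem hω]
        exact ⟨le_refl 0, hi, hj⟩
    have hmuA0 : ∀ t, 0 ≤ muA t := by
      intro t
      rw [← AEEqFun.coeFn_le]
      filter_upwards [hmuAco, hdkey, ae_nonneg (hlam0 t),
        AEEqFun.coeFn_zero (α := Ω) (μ := P) (β := ℝ)] with ω hco hd hnn h0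
      rw [h0, Pi.zero_apply, hco t]
      rcases eq_or_ne t i with h1 | h1
      · rcases eq_or_ne t j with h2 | h2
        · exact absurd (h1.symm.trans h2) (Ne.symm hji)
        · rw [if_pos h1, if_neg h2]
          have := hd.1; linarith
      · rcases eq_or_ne t j with h2 | h2
        · rw [if_neg h1, if_pos h2]
          subst h2
          have := hd.2.2; linarith
        · rw [if_neg h1, if_neg h2]; linarith
    have hmuB0 : ∀ t, 0 ≤ muB t := by
      intro t
      rw [← AEEqFun.coeFn_le]
      filter_upwards [hmuBco, hdkey, ae_nonneg (hlam0 t),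
        AEEqFun.coeFn_zero (α := Ω) (μ := P) (β := ℝ)] with ω hco hd hnn h0
      rw [h0, Pi.zero_apply, hco t]
      rcases eq_or_ne t i with h1 | h1
      · rcases eq_or_ne t j with h2 | h2
        · exact absurd (h1.symm.trans h2) (Ne.symm hji)
        · rw [if_pos h1, if_neg h2]
          subst h1
          have := hd.2.1; linarith
      · rcases eq_or_ne t j with h2 | h2
        · rw [if_neg h1, if_pos h2]
          have := hd.1; linarith
        · rw [if_neg h1, if_neg h2]; linarith
    have hsumA : (∑ t, muA t) = 1 := by
      have h1 : (∑ t, muA t)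
          = (∑ t, lam t) + (∑ t : Fin N, if t = i then D else 0)
            - (∑ t : Fin N, if t = j then D else 0) := by
        simp only [hmuA, Finset.sum_sub_distrib, Finset.sum_add_distrib]
      rw [h1, Finset.sum_ite_eq' Finset.univ i fun _ => D,
        Finset.sum_ite_eq' Finset.univ j fun _ => D, hlam1]
      simp
    have hsumB : (∑ t, muB t) = 1 := by
      have h1 : (∑ t, muB t)
          = ((∑ t, lam t) - (∑ t : Fin N, if t = i then D else 0))
            + (∑ t : Fin N, if t = j then D else 0) := by
        simp only [hmuB, Finset.sum_sub_distrib, Finset.sum_add_distrib]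
      rw [h1, Finset.sum_ite_eq' Finset.univ i fun _ => D,
        Finset.sum_ite_eq' Finset.univ j fun _ => D, hlam1]
      simp
    refine ⟨∑ t, muA t • X t, ∑ t, muB t • X t,
      AEEqFun.mk (fun _ : Ω => (2:ℝ)⁻¹) aestronglyMeasurable_const,
      ⟨muA, hmuA0, hsumA, rfl⟩, ⟨muB, hmuB0, hsumB, rfl⟩, ?_, ?_, ?_, ?_⟩
    · intro hYW
      have h := coeff_unique X hX muA lam hsumA hlam1 (hYW.trans hWe)
      have h2 : muA i = lam i := congrFun h i
      have h3 : muA i = lam i + D := by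
        simp only [hmuA, eq_self_iff_true, if_true, if_neg (Ne.symm hji)]
        rw [sub_zero]
      rw [h3] at h2
      exact hDne (add_eq_left.mp h2)
    · intro hZW
      have h := coeff_unique X hX muB lam hsumB hlam1 (hZW.trans hWe)
      have h2 : muB i = lam i := congrFun h i
      have h3 : muB i = lam i - D := by
        simp only [hmuB, eq_self_iff_true, if_true, if_neg (Ne.symm hji)]
        rw [add_zero]
      rw [h3] at h2
      exact hDne (sub_eq_self.mp h2)
    · filter_upwards [AEEqFun.coeFn_mk (μ := P)
        (fun _ : Ω => (2:ℝ)⁻¹) aestronglyMeasurable_const] with ω h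
      have h2 : AEEqFun.mk (fun _ : Ω => (2:ℝ)⁻¹)
          (aestronglyMeasurable_const (μ := P)) ω = (2:ℝ)⁻¹ := h
      rw [h2]; norm_num
    · funext k
      set half : L0 P := AEEqFun.mk (fun _ : Ω => (2:ℝ)⁻¹) aestronglyMeasurable_const with hhalf
      have e : ((half • (∑ t, muA t • X t)
          + (1 - half) • (∑ t, muB t • X t)) : Fin d → L0 P) k
          = half * (∑ t, muA t • X t) k
            + (1 - half) * (∑ t, muB t • X t) k := rfl
      rw [hWe, e]
      apply AEEqFun.ext
      have hhco : ⇑half =ᵐ[P] fun _ => (2:ℝ)⁻¹ := AEEqFun.coeFn_mk _ _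
      have h1 := AEEqFun.coeFn_add (half * (∑ t, muA t • X t) k)
        ((1 - half) * (∑ t, muB t • X t) k)
      have h2 := AEEqFun.coeFn_mul half ((∑ t, muA t • X t) k)
      have h3 := AEEqFun.coeFn_mul (1 - half) ((∑ t, muB t • X t) k)
      have h4 := AEEqFun.coeFn_sub (1 : L0 P) half
      filter_upwards [h1, h2, h3, h4, hhco,
        AEEqFun.coeFn_one (α := Ω) (μ := P) (β := ℝ),
        ae_eval X lam, ae_eval X muA, ae_eval X muB, hmuAco, hmuBco]
        with ω h1 h2 h3 h4 hhco hone hevL hevA hevB hcoA hcoB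
      have hh2 : half ω = (2:ℝ)⁻¹ := hhco
      have hone2 : (1 : L0 P) ω = (1:ℝ) := hone
      rw [hevL k, h1, Pi.add_apply, h2, Pi.mul_apply, h3, Pi.mul_apply, h4, Pi.sub_apply,
        hone2, hh2, hevA k, hevB k]
      have hsum2 : (∑ t, muA t ω * X t k ω) + (∑ t, muB t ω * X t k ω)
          = 2 * ∑ t, lam t ω * X t k ω := by
        rw [← Finset.sum_add_distrib, Finset.mul_sum]
        refine Finset.sum_congr rfl fun t _ => ?_
        rw [hcoA t, hcoB t]; ring
      linarith [hsum2]
end
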